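/- arXiv:1304.6126 — 12 statements merged into one kernel-verified Lean document; each statement's English description precedes it below -/
import Mathlib

section
/- Let X be a real Hilbert space and let S be a nonempty subset of X that is closed under scalar multiplication. If w is a best approximation of v in S (i.e. w ∈ S and ‖v − w‖ = dist(v, S)), then ⟨v, w⟩ = ‖w‖², consequently ‖v − w‖² = ‖v‖² − ‖w‖², and moreover ‖w‖ = sup over nonzero z ∈ S of ⟨v, z⟩/‖z‖. -/
open scoped RealInnerProductSpace

/-- If `w` is a best approximation of `v` in a nonempty subset `S` of a real Hilbert space
that is closed under scalar multiplication, then `⟪v, w⟫ = ‖w‖²`, hence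
`‖v - w‖² = ‖v‖² - ‖w‖²`, and `‖w‖` equals the supremum of `⟪v, z⟫ / ‖z‖` over nonzero
`z ∈ S`. -/
theorem best_approx_in_cone {X : Type*} [NormedAddCommGroup X] [InnerProductSpace ℝ X]
    [CompleteSpace X]
    (S : Set X) (hS : S.Nonempty) (hScone : ∀ (c : ℝ), ∀ v ∈ S, c • v ∈ S)
    (v w : X) (hwS : w ∈ S) (hbest : ‖v - w‖ = Metric.infDist v S) :
    ⟪v, w⟫ = ‖w‖ ^ 2 ∧ ‖v - w‖ ^ 2 = ‖v‖ ^ 2 - ‖w‖ ^ 2 ∧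
      ‖w‖ = ⨆ z : {z : X // z ∈ S ∧ z ≠ 0}, ⟪v, (z : X)⟫ / ‖(z : X)‖ := by
  -- basic inequality: w is at least as close as any t • z with z ∈ S
  have hle : ∀ (t : ℝ) (z : X), z ∈ S → ‖v - w‖ ≤ ‖v - t • z‖ := by
    intro t z hz
    rw [hbest]
    calc Metric.infDist v S ≤ dist v (t • z) :=
          Metric.infDist_le_dist_of_mem (hScone t z hz)
      _ = ‖v - t • z‖ := dist_eq_norm _ _
  have hsq : ∀ (t : ℝ) (z : X), z ∈ S →
      ‖v - w‖ ^ 2 ≤ ‖v‖ ^ 2 - 2 * (t * ⟪v, z⟫) + t ^ 2 * ‖z‖ ^ 2 := by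
    intro t z hz
    have h := hle t z hz
    have hexp : ‖v - t • z‖ ^ 2 = ‖v‖ ^ 2 - 2 * (t * ⟪v, z⟫) + t ^ 2 * ‖z‖ ^ 2 := by
      rw [@norm_sub_sq_real, real_inner_smul_right, norm_smul]
      simp [mul_pow, sq_abs]
    nlinarith [norm_nonneg (v - w), norm_nonneg (v - t • z)]
  -- first claim
  have h1 : ⟪v, w⟫ = ‖w‖ ^ 2 := by
    by_cases hw : w = (0 : X)
    · simp [hw]
    · have hb : (0 : ℝ) < ‖w‖ ^ 2 := pow_pos (norm_pos_iff.mpr hw) 2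
      set a := ⟪v, w⟫ with ha
      set b := ‖w‖ ^ 2 with hbdef
      have h := hsq (a / b) w hwS
      have hexp : ‖v - w‖ ^ 2 = ‖v‖ ^ 2 - 2 * a + b := by
        rw [@norm_sub_sq_real]
      rw [hexp] at h
      have hb' : b ≠ 0 := ne_of_gt hb
      have h' : (a - b) ^ 2 ≤ 0 := by
        have hdiv : (a / b) * a = a ^ 2 / b := by field_simp
        have hdiv2 : (a / b) ^ 2 * b = a ^ 2 / b := by field_simp
        rw [hdiv, hdiv2] at h
        have : b - 2 * a ≤ -(a ^ 2 / b) := by linarith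
        have := (div_le_iff₀ hb).mp (by linarith : a ^ 2 / b ≤ 2 * a - b)
        nlinarith
      have h0 : a - b = 0 := by nlinarith [sq_nonneg (a - b)]
      linarith
  -- second claim
  have h2 : ‖v - w‖ ^ 2 = ‖v‖ ^ 2 - ‖w‖ ^ 2 := by
    rw [@norm_sub_sq_real, h1]; ring
  refine ⟨h1, h2, ?_⟩
  -- key bound for the sup
  have hkey : ∀ z ∈ S, z ≠ 0 → ⟪v, z⟫ / ‖z‖ ≤ ‖w‖ := by
    intro z hz hz0
    have hn : (0 : ℝ) < ‖z‖ := norm_pos_iff.mpr hz0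
    have h := hsq (⟪v, z⟫ / ‖z‖ ^ 2) z hz
    rw [h2] at h
    have hn2 : (‖z‖ : ℝ) ^ 2 ≠ 0 := by positivity
    have hk : ⟪v, z⟫ ^ 2 ≤ ‖w‖ ^ 2 * ‖z‖ ^ 2 := by
      have hdiv : (⟪v, z⟫ / ‖z‖ ^ 2) * ⟪v, z⟫ = ⟪v, z⟫ ^ 2 / ‖z‖ ^ 2 := by
        field_simp
      have hdiv2 : (⟪v, z⟫ / ‖z‖ ^ 2) ^ 2 * ‖z‖ ^ 2 = ⟪v, z⟫ ^ 2 / ‖z‖ ^ 2 := by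
        field_simp
      rw [hdiv, hdiv2] at h
      have : ⟪v, z⟫ ^ 2 / ‖z‖ ^ 2 ≤ ‖w‖ ^ 2 := by linarith
      have := (div_le_iff₀ (by positivity : (0:ℝ) < ‖z‖ ^ 2)).mp this
      linarith
    rw [div_le_iff₀ hn]
    nlinarith [mul_nonneg (norm_nonneg w) (norm_nonneg z),
      sq_nonneg (⟪v, z⟫ - ‖w‖ * ‖z‖), sq_nonneg (⟪v, z⟫ + ‖w‖ * ‖z‖)]
  by_cases hne : Nonempty {z : X // z ∈ S ∧ z ≠ 0}
  · have hbdd : BddAbove (Set.range fun z : {z : X // z ∈ S ∧ z ≠ 0} =>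
        ⟪v, (z : X)⟫ / ‖(z : X)‖) := by
      refine ⟨‖w‖, ?_⟩
      rintro x ⟨⟨z, hz, hz0⟩, rfl⟩
      exact hkey z hz hz0
    have hub : (⨆ z : {z : X // z ∈ S ∧ z ≠ 0}, ⟪v, (z : X)⟫ / ‖(z : X)‖) ≤ ‖w‖ :=
      ciSup_le fun ⟨z, hz, hz0⟩ => hkey z hz hz0
    by_cases hw : w = (0 : X)
    · obtain ⟨⟨z, hz, hz0⟩⟩ := hne
      have hmz : -z ∈ S := by
        have := hScone (-1) z hz; simpa using this
      have hmz0 : (-z : X) ≠ 0 := by simpa using hz0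
      have l1 : ⟪v, z⟫ / ‖z‖ ≤ ⨆ z : {z : X // z ∈ S ∧ z ≠ 0}, ⟪v, (z : X)⟫ / ‖(z : X)‖ :=
        le_ciSup hbdd ⟨z, hz, hz0⟩
      have l2 : ⟪v, -z⟫ / ‖-z‖ ≤ ⨆ z : {z : X // z ∈ S ∧ z ≠ 0}, ⟪v, (z : X)⟫ / ‖(z : X)‖ :=
        le_ciSup hbdd ⟨-z, hmz, hmz0⟩
      have hsum : ⟪v, -z⟫ / ‖-z‖ = -(⟪v, z⟫ / ‖z‖) := by
        rw [inner_neg_right, norm_neg]; ring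
      rw [hsum] at l2
      have hw0 : ‖w‖ = 0 := by simp [hw]
      rw [hw0] at hub ⊢
      linarith
    · refine le_antisymm ?_ hub
      have hfw : ⟪v, w⟫ / ‖w‖ = ‖w‖ := by
        rw [h1]
        have : ‖w‖ ≠ 0 := by simpa using hw
        field_simp
      calc ‖w‖ = ⟪v, w⟫ / ‖w‖ := hfw.symm
        _ ≤ _ := le_ciSup hbdd ⟨w, hwS, hw⟩
  · have hempty : IsEmpty {z : X // z ∈ S ∧ z ≠ 0} := not_nonempty_iff.mp hne
    have hw : w = 0 := by
      by_contra hw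
      exact hne ⟨⟨w, hwS, hw⟩⟩
    rw [hw]
    simp [Real.iSup_of_isEmpty]
end

section
/- Let X and Y be real Hilbert spaces, let A : X → Y be a continuous linear map, and let 0 < α ≤ β be constants such that α‖v‖_X ≤ ‖A v‖_Y ≤ β‖v‖_X for all v ∈ X. For ρ ∈ ℝ define the bounded operator B_ρ = I_X − ρ A*A, where A* is the Hilbert adjoint of A. Then for every v ∈ X, ‖B_ρ v‖_X ≤ max(|1 − ρβ²|, |1 − ρα²|) · ‖v‖_X. -/
open scoped RealInnerProductSpace

lemma max_abs_eq (x y : ℝ) : max |x| |y| = |x + y| / 2 + |x - y| / 2 := by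
  rcases abs_cases x with ⟨h1, h1'⟩ | ⟨h1, h1'⟩ <;>
  rcases abs_cases y with ⟨h2, h2'⟩ | ⟨h2, h2'⟩ <;>
  rcases abs_cases (x + y) with ⟨h3, h3'⟩ | ⟨h3, h3'⟩ <;>
  rcases abs_cases (x - y) with ⟨h4, h4'⟩ | ⟨h4, h4'⟩ <;>
  rcases max_cases |x| |y| with ⟨h5, h5'⟩ | ⟨h5, h5'⟩ <;>
  linarith

lemma selfadj_pointwise_norm_le {X : Type*} [NormedAddCommGroup X] [InnerProductSpace ℝ X]
    (S : X →L[ℝ] X) (r : ℝ)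
    (hsym : ∀ a b : X, ⟪S a, b⟫ = ⟪a, S b⟫)
    (hq : ∀ w : X, |⟪S w, w⟫| ≤ r * ‖w‖ ^ 2) (v : X) : ‖S v‖ ≤ r * ‖v‖ := by
  have hpolar : ∀ a b : X, ⟪S a, b⟫ = (⟪S (a + b), a + b⟫ - ⟪S (a - b), a - b⟫) / 4 := by
    intro a b
    have h1 := hsym a b
    have h2 := real_inner_comm (S a) b
    have h3 := real_inner_comm (S b) a
    simp only [map_add, map_sub, inner_add_left, inner_add_right, inner_sub_left,
      inner_sub_right]
    linarith
  by_cases hv : v = 0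
  · simp [hv]
  · have hv0 : 0 < ‖v‖ := norm_pos_iff.mpr hv
    have hr0 : 0 ≤ r := by
      have h := hq v
      have h0 : (0:ℝ) ≤ |⟪S v, v⟫| := abs_nonneg _
      nlinarith [mul_pos hv0 hv0]
    by_cases hu : S v = 0
    · simp only [hu, norm_zero]
      exact mul_nonneg hr0 (norm_nonneg v)
    · set u := S v with hu'
      have hun : 0 < ‖u‖ := norm_pos_iff.mpr hu
      set w : X := (‖v‖ / ‖u‖) • u with hw
      have hwn : ‖w‖ = ‖v‖ := by
        simp [hw, norm_smul, abs_div, abs_of_nonneg (norm_nonneg v),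
          abs_of_nonneg (norm_nonneg u), div_mul_cancel₀, hun.ne']
      have hiw : ⟪u, w⟫ = ‖v‖ * ‖u‖ := by
        rw [hw, real_inner_smul_right, real_inner_self_eq_norm_sq]
        field_simp
      have key : ⟪S v, w⟫ ≤ r * ‖v‖ ^ 2 := by
        rw [hpolar v w]
        have hb1 : ⟪S (v + w), v + w⟫ ≤ r * ‖v + w‖ ^ 2 := le_trans (le_abs_self _) (hq _)
        have hb2 : -(r * ‖v - w‖ ^ 2) ≤ ⟪S (v - w), v - w⟫ := by
          have h := hq (v - w)
          have h' := neg_abs_le (⟪S (v - w), v - w⟫)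
          linarith
        have hpar : ‖v + w‖ ^ 2 + ‖v - w‖ ^ 2 = 2 * (‖v‖ ^ 2 + ‖w‖ ^ 2) := by
          have := parallelogram_law_with_norm ℝ v w
          linarith
        rw [hwn] at hpar
        have hsum : r * ‖v + w‖ ^ 2 + r * ‖v - w‖ ^ 2 = 4 * (r * ‖v‖ ^ 2) := by
          linear_combination r * hpar
        linarith
      rw [← hu', hiw] at key
      have : ‖u‖ * ‖v‖ ≤ (r * ‖v‖) * ‖v‖ := by nlinarith
      exact le_of_mul_le_mul_right this hv0

/-- If `A : X → Y` is a continuous linear map between real Hilbert spaces satisfying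
`α‖v‖ ≤ ‖A v‖ ≤ β‖v‖` with `0 < α ≤ β`, then for the operator `B_ρ = I - ρ A*A` one has
`‖B_ρ v‖ ≤ max |1 - ρβ²| |1 - ρα²| · ‖v‖` for every `v`. -/
theorem norm_id_sub_smul_adjoint_comp_le {X Y : Type*}
    [NormedAddCommGroup X] [InnerProductSpace ℝ X] [CompleteSpace X]
    [NormedAddCommGroup Y] [InnerProductSpace ℝ Y] [CompleteSpace Y]
    (A : X →L[ℝ] Y) (α β ρ : ℝ) (hα : 0 < α) (hαβ : α ≤ β)
    (hlow : ∀ v : X, α * ‖v‖ ≤ ‖A v‖) (hup : ∀ v : X, ‖A v‖ ≤ β * ‖v‖) :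
    ∀ v : X,
      ‖(ContinuousLinearMap.id ℝ X - ρ • ((ContinuousLinearMap.adjoint A).comp A)) v‖ ≤
        max |1 - ρ * β ^ 2| |1 - ρ * α ^ 2| * ‖v‖ := by
  intro v
  set T : X →L[ℝ] X := (ContinuousLinearMap.adjoint A).comp A with hT
  set c : ℝ := (α ^ 2 + β ^ 2) / 2 with hc
  set r : ℝ := (β ^ 2 - α ^ 2) / 2 with hrdef
  set S : X →L[ℝ] X := T - c • ContinuousLinearMap.id ℝ X with hS
  have hr0 : 0 ≤ r := by rw [hrdef]; nlinarith
  have hTinner : ∀ a b : X, ⟪T a, b⟫ = ⟪A a, A b⟫ := by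
    intro a b
    simp [hT, ContinuousLinearMap.adjoint_inner_left]
  have hsym : ∀ a b : X, ⟪S a, b⟫ = ⟪a, S b⟫ := by
    intro a b
    simp only [hS, ContinuousLinearMap.sub_apply, ContinuousLinearMap.smul_apply,
      ContinuousLinearMap.id_apply, inner_sub_left, inner_sub_right,
      real_inner_smul_left, real_inner_smul_right, hTinner]
    have h2 := hTinner b a
    have h3 := real_inner_comm (A a) (A b)
    have h4 := real_inner_comm a (T b)
    linarith
  have hq : ∀ w : X, |⟪S w, w⟫| ≤ r * ‖w‖ ^ 2 := by
    intro w
    have h1 : ⟪S w, w⟫ = ‖A w‖ ^ 2 - c * ‖w‖ ^ 2 := by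
      simp only [hS, ContinuousLinearMap.sub_apply, ContinuousLinearMap.smul_apply,
        ContinuousLinearMap.id_apply, inner_sub_left, real_inner_smul_left, hTinner]
      rw [real_inner_self_eq_norm_sq, real_inner_self_eq_norm_sq]
    have hlow' := hlow w
    have hup' := hup w
    have hAn : 0 ≤ ‖A w‖ := norm_nonneg _
    have hwn : 0 ≤ ‖w‖ := norm_nonneg _
    have hA2l : α ^ 2 * ‖w‖ ^ 2 ≤ ‖A w‖ ^ 2 := by nlinarith [mul_nonneg hα.le hwn]
    have hA2u : ‖A w‖ ^ 2 ≤ β ^ 2 * ‖w‖ ^ 2 := by nlinarith [mul_nonneg hα.le hwn]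
    rw [h1, abs_le]
    constructor
    · rw [hrdef, hc]; nlinarith
    · rw [hrdef, hc]; nlinarith
  have hSnorm : ‖S v‖ ≤ r * ‖v‖ := selfadj_pointwise_norm_le S r hsym hq v
  have hdecomp : (ContinuousLinearMap.id ℝ X - ρ • T) v = (1 - ρ * c) • v - ρ • S v := by
    simp only [hS, ContinuousLinearMap.sub_apply, ContinuousLinearMap.smul_apply,
      ContinuousLinearMap.id_apply, smul_sub, sub_smul, one_smul, smul_smul]
    module
  rw [hdecomp]
  have h1 : ‖(1 - ρ * c) • v - ρ • S v‖ ≤ |1 - ρ * c| * ‖v‖ + |ρ| * (r * ‖v‖) := by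
    calc ‖(1 - ρ * c) • v - ρ • S v‖ ≤ ‖(1 - ρ * c) • v‖ + ‖ρ • S v‖ := norm_sub_le _ _
    _ = |1 - ρ * c| * ‖v‖ + |ρ| * ‖S v‖ := by rw [norm_smul, norm_smul]; simp [Real.norm_eq_abs]
    _ ≤ |1 - ρ * c| * ‖v‖ + |ρ| * (r * ‖v‖) := by gcongr
  have hmax : max |1 - ρ * β ^ 2| |1 - ρ * α ^ 2| = |1 - ρ * c| + |ρ| * r := by
    rw [max_abs_eq]
    have e1 : 1 - ρ * β ^ 2 + (1 - ρ * α ^ 2) = 2 * (1 - ρ * c) := by rw [hc]; ring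
    have e2 : 1 - ρ * β ^ 2 - (1 - ρ * α ^ 2) = 2 * (-(ρ * r)) := by rw [hrdef]; ring
    rw [e1, e2, abs_mul, abs_mul, abs_neg, abs_mul, abs_of_nonneg hr0, abs_two]
    ring
  rw [hmax, add_mul]
  linarith [h1]
end

section
/- Let X be a real Hilbert space, S a nonempty subset of X, u ∈ X, and let B : X → X be a map satisfying ‖B(v)‖ ≤ γ‖v‖ for all v ∈ X, where 0 ≤ γ < 1/2. Let (u^k)_{k≥0} be a sequence with u^0 ∈ X and, for each k ≥ 0, u^{k+1} a best approximation of u + B(u^k − u) in S (i.e. u^{k+1} ∈ S with ‖u + B(u^k − u) − u^{k+1}‖ = dist(u + B(u^k − u), S)). Then for every k ≥ 1, ‖u^k − u‖ ≤ (2γ)^k ‖u^0 − u‖ + (1/(1 − 2γ)) dist(u, S). -/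
/-- Gradient-type algorithm with a contraction-like perturbation `B` (`‖B v‖ ≤ γ‖v‖`,
`γ < 1/2`) and exact best approximations in `S`: error bound at every iteration `k ≥ 1`. -/
theorem gradient_algorithm_error_bound {X : Type*}
    [NormedAddCommGroup X] [InnerProductSpace ℝ X] [CompleteSpace X]
    (S : Set X) (hS : S.Nonempty) (u : X) (B : X → X) (γ : ℝ)
    (hγ0 : 0 ≤ γ) (hγ : γ < 1 / 2) (hB : ∀ v : X, ‖B v‖ ≤ γ * ‖v‖)
    (useq : ℕ → X)
    (hstep : ∀ k : ℕ, useq (k + 1) ∈ S ∧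
      ‖u + B (useq k - u) - useq (k + 1)‖ = Metric.infDist (u + B (useq k - u)) S) :
    ∀ k : ℕ, 1 ≤ k →
      ‖useq k - u‖ ≤ (2 * γ) ^ k * ‖useq 0 - u‖ + (1 / (1 - 2 * γ)) * Metric.infDist u S := by
  have h2γ : 1 - 2 * γ > 0 := by linarith
  have hd : 0 ≤ Metric.infDist u S := Metric.infDist_nonneg
  set d := Metric.infDist u S with hdef
  -- recursive inequality
  have hrec : ∀ k : ℕ, ‖useq (k + 1) - u‖ ≤ 2 * γ * ‖useq k - u‖ + d := by
    intro k
    set v := useq k - u with hv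
    have hBv : ‖B v‖ ≤ γ * ‖v‖ := hB v
    have h1 : ‖useq (k + 1) - u‖ ≤ ‖u + B v - useq (k + 1)‖ + ‖B v‖ := by
      have : useq (k + 1) - u = -(u + B v - useq (k + 1)) + B v := by abel
      rw [this]
      calc ‖-(u + B v - useq (k + 1)) + B v‖ ≤ ‖-(u + B v - useq (k + 1))‖ + ‖B v‖ :=
            norm_add_le _ _
        _ = ‖u + B v - useq (k + 1)‖ + ‖B v‖ := by rw [norm_neg]
    have h2 : ‖u + B v - useq (k + 1)‖ = Metric.infDist (u + B v) S := (hstep k).2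
    have h3 : Metric.infDist (u + B v) S ≤ d + ‖B v‖ := by
      calc Metric.infDist (u + B v) S ≤ Metric.infDist u S + dist (u + B v) u :=
            Metric.infDist_le_infDist_add_dist
        _ = d + ‖B v‖ := by rw [dist_eq_norm]; congr 1; simp
    have : ‖useq (k + 1) - u‖ ≤ d + ‖B v‖ + ‖B v‖ := by
      calc ‖useq (k + 1) - u‖ ≤ ‖u + B v - useq (k + 1)‖ + ‖B v‖ := h1
        _ ≤ d + ‖B v‖ + ‖B v‖ := by rw [h2]; linarith
    linarith
  -- main induction: holds for all k
  have hmain : ∀ k : ℕ, ‖useq k - u‖ ≤ (2 * γ) ^ k * ‖useq 0 - u‖ + (1 / (1 - 2 * γ)) * d := by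
    intro k
    induction k with
    | zero =>
      simp only [pow_zero, one_mul]
      have : 0 ≤ (1 / (1 - 2 * γ)) * d := by positivity
      linarith
    | succ k ih =>
      have h2γ0 : 0 ≤ 2 * γ := by linarith
      have key : 2 * γ * ((1 / (1 - 2 * γ)) * d) + d = (1 / (1 - 2 * γ)) * d := by
        field_simp
        ring
      calc ‖useq (k + 1) - u‖ ≤ 2 * γ * ‖useq k - u‖ + d := hrec k
        _ ≤ 2 * γ * ((2 * γ) ^ k * ‖useq 0 - u‖ + (1 / (1 - 2 * γ)) * d) + d := by
            have := mul_le_mul_of_nonneg_left ih h2γ0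
            linarith
        _ = (2 * γ) ^ (k + 1) * ‖useq 0 - u‖ + (2 * γ * ((1 / (1 - 2 * γ)) * d) + d) := by ring
        _ = (2 * γ) ^ (k + 1) * ‖useq 0 - u‖ + (1 / (1 - 2 * γ)) * d := by rw [key]
  intro k _
  exact hmain k
end

section
/- Let X be a real Hilbert space, S a nonempty subset of X, u ∈ X, and let B : X → X be a map satisfying ‖B(v)‖ ≤ γ‖v‖ for all v ∈ X, where 0 ≤ γ < 1/2. Let (u^k)_{k≥0} be a sequence with u^0 ∈ X and, for each k ≥ 0, u^{k+1} a best approximation of u + B(u^k − u) in S. Then limsup_{k→∞} ‖u^k − u‖ ≤ (1/(1 − 2γ)) dist(u, S). -/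
/-!
Since `u^{k+1}` is a best approximation of `u + B(u^k - u)` and the distance function to `S` is
1-Lipschitz, `‖u^{k+1} - u‖ ≤ dist(u, S) + 2‖B(u^k - u)‖ ≤ dist(u, S) + 2γ‖u^k - u‖`. The errors
thus obey a linear recursion with contraction factor `2γ < 1`, whose fixed point
`dist(u, S) / (1 - 2γ)` they approach geometrically.
-/

open Filter Metric

theorem norm_sub_le_infDist_add_two_mul_norm {E : Type*} [SeminormedAddCommGroup E] {S : Set E}
    {u b w : E} (hw : ‖u + b - w‖ = infDist (u + b) S) :
    ‖w - u‖ ≤ infDist u S + 2 * ‖b‖ :=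
  calc ‖w - u‖ = ‖b - (u + b - w)‖ := by congr 1; abel
    _ ≤ ‖b‖ + infDist (u + b) S := hw ▸ norm_sub_le _ _
    _ ≤ ‖b‖ + (infDist u S + dist (u + b) u) := by gcongr; exact infDist_le_infDist_add_dist
    _ = infDist u S + 2 * ‖b‖ := by rw [dist_eq_norm, add_sub_cancel_left]; ring

section LinearRecursion

variable {e : ℕ → ℝ} {c d : ℝ}

theorem le_pow_mul_add_of_le_add_mul (hc0 : 0 ≤ c) (hc1 : c ≠ 1)
    (hrec : ∀ k, e (k + 1) ≤ d + c * e k) (k : ℕ) :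
    e k ≤ c ^ k * (e 0 - d / (1 - c)) + d / (1 - c) := by
  have hfix : d + c * (d / (1 - c)) = d / (1 - c) := by
    field_simp [sub_ne_zero.mpr hc1.symm]; ring
  induction k with
  | zero => simp
  | succ k ih =>
    calc e (k + 1) ≤ d + c * e k := hrec k
      _ ≤ d + c * (c ^ k * (e 0 - d / (1 - c)) + d / (1 - c)) := by gcongr
      _ = c ^ (k + 1) * (e 0 - d / (1 - c)) + d / (1 - c) := by linear_combination hfix

theorem limsup_le_div_of_le_add_mul (hc0 : 0 ≤ c) (hc1 : c < 1) (he : ∀ k, 0 ≤ e k)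
    (hrec : ∀ k, e (k + 1) ≤ d + c * e k) :
    limsup e atTop ≤ d / (1 - c) := by
  have hlim : Tendsto (fun k => c ^ k * (e 0 - d / (1 - c)) + d / (1 - c)) atTop
      (nhds (d / (1 - c))) := by
    simpa using ((tendsto_pow_atTop_nhds_zero_of_lt_one hc0 hc1).mul_const
      (e 0 - d / (1 - c))).add_const (d / (1 - c))
  rw [← hlim.limsup_eq]
  exact limsup_le_limsup (.of_forall (le_pow_mul_add_of_le_add_mul hc0 hc1.ne hrec))
    (isCoboundedUnder_le_of_le atTop he) hlim.isBoundedUnder_le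

end LinearRecursion

theorem gradient_algorithm_limsup_general {X : Type*}
    [NormedAddCommGroup X]
    (S : Set X) (u : X) (B : X → X) (γ : ℝ)
    (hγ0 : 0 ≤ γ) (hγ : γ < 1 / 2) (hB : ∀ v : X, ‖B v‖ ≤ γ * ‖v‖)
    (useq : ℕ → X)
    (hstep : ∀ k : ℕ, useq (k + 1) ∈ S ∧
      ‖u + B (useq k - u) - useq (k + 1)‖ = Metric.infDist (u + B (useq k - u)) S) :
    Filter.limsup (fun k : ℕ => ‖useq k - u‖) Filter.atTop ≤
      (1 / (1 - 2 * γ)) * Metric.infDist u S := by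
  have hrec (k : ℕ) : ‖useq (k + 1) - u‖ ≤ infDist u S + 2 * γ * ‖useq k - u‖ := by
    have := norm_sub_le_infDist_add_two_mul_norm (hstep k).2
    linarith [hB (useq k - u)]
  rw [one_div_mul_eq_div]
  exact limsup_le_div_of_le_add_mul (by positivity) (by linarith) (fun _ => norm_nonneg _) hrec

/-- Gradient-type algorithm with a contraction-like perturbation `B` (`‖B v‖ ≤ γ‖v‖`,
`γ < 1/2`) and exact best approximations in `S`: the limsup of the errors is bounded by
`(1/(1-2γ)) dist(u, S)`. -/
theorem gradient_algorithm_limsup {X : Type*}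
    [NormedAddCommGroup X] [InnerProductSpace ℝ X] [CompleteSpace X]
    (S : Set X) (hS : S.Nonempty) (u : X) (B : X → X) (γ : ℝ)
    (hγ0 : 0 ≤ γ) (hγ : γ < 1 / 2) (hB : ∀ v : X, ‖B v‖ ≤ γ * ‖v‖)
    (useq : ℕ → X)
    (hstep : ∀ k : ℕ, useq (k + 1) ∈ S ∧
      ‖u + B (useq k - u) - useq (k + 1)‖ = Metric.infDist (u + B (useq k - u)) S) :
    Filter.limsup (fun k : ℕ => ‖useq k - u‖) Filter.atTop ≤
      (1 / (1 - 2 * γ)) * Metric.infDist u S :=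
  gradient_algorithm_limsup_general S u B γ hγ0 hγ hB useq hstep
end

section
/- Let X and Y be real Hilbert spaces, let A : X → Y be a continuous linear map that is isometric, i.e. ‖A v‖_Y = ‖v‖_X for all v ∈ X, let b ∈ Y, and let u ∈ X satisfy A u = b. Let S be a nonempty subset of X and let ρ ∈ ℝ with |1 − ρ| < 1/2. Let (u^k)_{k≥0} be a sequence with u^0 ∈ X and, for each k ≥ 0, u^{k+1} a best approximation of u^k − ρ A*(A u^k − b) in S. Then for every k ≥ 1, ‖u^k − u‖ ≤ (2|1 − ρ|)^k ‖u^0 − u‖ + (1/(1 − 2|1 − ρ|)) dist(u, S). -/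
open scoped RealInnerProductSpace


/-- Ideal gradient algorithm for an isometric operator `A` (`‖A v‖ = ‖v‖`): with step
`ρ` satisfying `|1 - ρ| < 1/2` and exact best approximations in `S`, the iterates satisfy
the error bound with rate `2|1 - ρ|`. -/
theorem ideal_gradient_algorithm_error_bound {X Y : Type*}
    [NormedAddCommGroup X] [InnerProductSpace ℝ X] [CompleteSpace X]
    [NormedAddCommGroup Y] [InnerProductSpace ℝ Y] [CompleteSpace Y]
    (A : X →L[ℝ] Y) (hA : ∀ v : X, ‖A v‖ = ‖v‖) (b : Y) (u : X) (hu : A u = b)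
    (S : Set X) (hS : S.Nonempty) (ρ : ℝ) (hρ : |1 - ρ| < 1 / 2)
    (useq : ℕ → X)
    (hstep : ∀ k : ℕ, useq (k + 1) ∈ S ∧
      ‖useq k - ρ • (ContinuousLinearMap.adjoint A) (A (useq k) - b) - useq (k + 1)‖ =
        Metric.infDist (useq k - ρ • (ContinuousLinearMap.adjoint A) (A (useq k) - b)) S) :
    ∀ k : ℕ, 1 ≤ k →
      ‖useq k - u‖ ≤ (2 * |1 - ρ|) ^ k * ‖useq 0 - u‖ +
        (1 / (1 - 2 * |1 - ρ|)) * Metric.infDist u S := by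
  have hinner : ∀ x y : X, ⟪A x, A y⟫ = ⟪x, y⟫ := by
    intro x y
    rw [real_inner_eq_norm_add_mul_self_sub_norm_mul_self_sub_norm_mul_self_div_two,
        real_inner_eq_norm_add_mul_self_sub_norm_mul_self_sub_norm_mul_self_div_two x y,
        ← map_add, hA, hA, hA]
  have hAA : ∀ v : X, (ContinuousLinearMap.adjoint A) (A v) = v := by
    intro v
    apply ext_inner_right ℝ
    intro w
    rw [ContinuousLinearMap.adjoint_inner_left]
    exact hinner v w
  set q := 2 * |1 - ρ| with hq
  have hq0 : 0 ≤ q := by positivity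
  have h1q : 0 < 1 - q := by rw [hq]; linarith
  set d := Metric.infDist u S with hd
  have hd0 : 0 ≤ d := Metric.infDist_nonneg
  have key : ∀ k, ‖useq (k + 1) - u‖ ≤ q * ‖useq k - u‖ + d := by
    intro k
    set v := useq k - ρ • (ContinuousLinearMap.adjoint A) (A (useq k) - b) with hv
    have hvu : v - u = (1 - ρ) • (useq k - u) := by
      rw [hv, ← hu, ← map_sub, hAA]
      module
    have hnv : ‖v - u‖ = |1 - ρ| * ‖useq k - u‖ := by
      rw [hvu, norm_smul, Real.norm_eq_abs]
    have h1 : ‖useq (k + 1) - u‖ ≤ ‖useq (k + 1) - v‖ + ‖v - u‖ :=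
      norm_sub_le_norm_sub_add_norm_sub _ _ _
    have h2 : ‖useq (k + 1) - v‖ = Metric.infDist v S := by
      rw [norm_sub_rev]; exact (hstep k).2
    have h3 : Metric.infDist v S ≤ d + ‖v - u‖ := by
      calc Metric.infDist v S ≤ Metric.infDist u S + dist v u :=
            Metric.infDist_le_infDist_add_dist
        _ = d + ‖v - u‖ := by rw [hd, dist_eq_norm]
    have : ‖useq (k + 1) - u‖ ≤ 2 * ‖v - u‖ + d := by linarith [h1, h2 ▸ h3]
    rw [hnv] at this
    calc ‖useq (k + 1) - u‖ ≤ 2 * (|1 - ρ| * ‖useq k - u‖) + d := this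
      _ = q * ‖useq k - u‖ + d := by ring
  have main : ∀ k : ℕ, ‖useq k - u‖ ≤ q ^ k * ‖useq 0 - u‖ + (1 / (1 - q)) * d := by
    intro k
    induction k with
    | zero =>
      simp only [pow_zero, one_mul]
      have : 0 ≤ (1 / (1 - q)) * d := by positivity
      linarith
    | succ k ih =>
      have h1 : ‖useq (k + 1) - u‖ ≤ q * ‖useq k - u‖ + d := key k
      have h2 : q * ‖useq k - u‖ ≤ q * (q ^ k * ‖useq 0 - u‖ + (1 / (1 - q)) * d) :=
        mul_le_mul_of_nonneg_left ih hq0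
      have h3 : q * ((1 / (1 - q)) * d) + d = (1 / (1 - q)) * d := by
        field_simp
        ring
      calc ‖useq (k + 1) - u‖ ≤ q * (q ^ k * ‖useq 0 - u‖ + (1 / (1 - q)) * d) + d := by
            linarith
        _ = q ^ (k + 1) * ‖useq 0 - u‖ + (q * ((1 / (1 - q)) * d) + d) := by ring
        _ = q ^ (k + 1) * ‖useq 0 - u‖ + (1 / (1 - q)) * d := by rw [h3]
  intro k _
  exact main k
end

section
/- Let X be a real Hilbert space, S a nonempty subset of X, u ∈ X, and let B : X → X be a map satisfying ‖B(v)‖ ≤ δ‖v‖ for all v ∈ X, where δ ≥ 0. Let η ≥ 1 with (1 + η)δ < 1. Let (u^k)_{k≥0} be a sequence with u^0 ∈ X and, for each k ≥ 0, u^{k+1} ∈ S an η-quasi-best approximation of z^k = u + B(u^k − u) in S, i.e. ‖z^k − u^{k+1}‖ ≤ η dist(z^k, S). Then for every k ≥ 1, ‖u^k − u‖ ≤ ((1 + η)δ)^k ‖u^0 − u‖ + (η/(1 − (1 + η)δ)) dist(u, S). -/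
/-- Perturbed gradient-type algorithm: with `‖B v‖ ≤ δ‖v‖`, `η ≥ 1` and `(1 + η)δ < 1`,
and `η`-quasi-best approximations in `S` at each step, the iterates satisfy the error
bound with rate `(1 + η)δ`. -/
theorem perturbed_gradient_algorithm_error_bound {X : Type*}
    [NormedAddCommGroup X] [InnerProductSpace ℝ X] [CompleteSpace X]
    (S : Set X) (hS : S.Nonempty) (u : X) (B : X → X) (δ η : ℝ)
    (hδ0 : 0 ≤ δ) (hη : 1 ≤ η) (hδη : (1 + η) * δ < 1)
    (hB : ∀ v : X, ‖B v‖ ≤ δ * ‖v‖)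
    (useq : ℕ → X)
    (hstep : ∀ k : ℕ, useq (k + 1) ∈ S ∧
      ‖u + B (useq k - u) - useq (k + 1)‖ ≤ η * Metric.infDist (u + B (useq k - u)) S) :
    ∀ k : ℕ, 1 ≤ k →
      ‖useq k - u‖ ≤ ((1 + η) * δ) ^ k * ‖useq 0 - u‖ +
        (η / (1 - (1 + η) * δ)) * Metric.infDist u S := by
  set q : ℝ := (1 + η) * δ with hq
  set d : ℝ := Metric.infDist u S with hd
  have hd0 : 0 ≤ d := Metric.infDist_nonneg
  have hq0 : 0 ≤ q := by positivity
  have hη0 : (0:ℝ) < η := by linarith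
  have h1q : 0 < 1 - q := by linarith
  -- one-step recursion
  have step : ∀ k : ℕ, ‖useq (k + 1) - u‖ ≤ q * ‖useq k - u‖ + η * d := by
    intro k
    set z : X := u + B (useq k - u) with hz
    have hzu : ‖z - u‖ ≤ δ * ‖useq k - u‖ := by
      have : z - u = B (useq k - u) := by rw [hz]; abel
      rw [this]; exact hB _
    have hinf : Metric.infDist z S ≤ d + ‖z - u‖ := by
      have := Metric.infDist_le_infDist_add_dist (x := z) (y := u) (s := S)
      rwa [dist_eq_norm] at this
    have h2 : ‖z - useq (k + 1)‖ ≤ η * (d + δ * ‖useq k - u‖) := by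
      calc ‖z - useq (k + 1)‖ ≤ η * Metric.infDist z S := (hstep k).2
        _ ≤ η * (d + ‖z - u‖) := by nlinarith
        _ ≤ η * (d + δ * ‖useq k - u‖) := by nlinarith
    have htri : ‖useq (k + 1) - u‖ ≤ ‖z - useq (k + 1)‖ + ‖z - u‖ := by
      have := norm_sub_le_norm_sub_add_norm_sub (useq (k+1)) z u
      rw [norm_sub_rev (useq (k+1)) z] at this
      linarith
    have : ‖useq (k + 1) - u‖ ≤ η * (d + δ * ‖useq k - u‖) + δ * ‖useq k - u‖ := by
      linarith
    have hqx : q * ‖useq k - u‖ = δ * ‖useq k - u‖ + η * (δ * ‖useq k - u‖) := by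
      rw [hq]; ring
    nlinarith
  -- main induction (holds for all k including 0)
  have main : ∀ k : ℕ, ‖useq k - u‖ ≤ q ^ k * ‖useq 0 - u‖ + (η / (1 - q)) * d := by
    intro k
    induction k with
    | zero =>
      simp only [pow_zero, one_mul]
      have : 0 ≤ (η / (1 - q)) * d := by positivity
      linarith
    | succ k ih =>
      have h1 : ‖useq (k + 1) - u‖ ≤ q * (q ^ k * ‖useq 0 - u‖ + (η / (1 - q)) * d) + η * d := by
        have := step k
        nlinarith
      have h2 : q * (η / (1 - q)) * d + η * d = (η / (1 - q)) * d := by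
        field_simp
        ring
      calc ‖useq (k + 1) - u‖ ≤ q * (q ^ k * ‖useq 0 - u‖ + (η / (1 - q)) * d) + η * d := h1
        _ = q ^ (k + 1) * ‖useq 0 - u‖ + (q * (η / (1 - q)) * d + η * d) := by ring
        _ = q ^ (k + 1) * ‖useq 0 - u‖ + (η / (1 - q)) * d := by rw [h2]
  intro k _
  exact main k
end

section
/- Let X be a real Hilbert space, S a nonempty subset of X, u ∈ X, and let B : X → X be a map satisfying ‖B(v)‖ ≤ δ‖v‖ for all v ∈ X, where δ ≥ 0. Let η ≥ 1 with (1 + η)δ < 1. Let (u^k)_{k≥0} be a sequence with u^0 ∈ X and, for each k ≥ 0, u^{k+1} ∈ S an η-quasi-best approximation of z^k = u + B(u^k − u) in S, i.e. ‖z^k − u^{k+1}‖ ≤ η dist(z^k, S). Then dist(u, S) ≤ ‖u − u^k‖ for all k ≥ 1, and limsup_{k→∞} ‖u^k − u‖ ≤ (η/(1 − (1 + η)δ)) dist(u, S). -/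
open Filter

/-- Perturbed gradient-type algorithm: with `‖B v‖ ≤ δ‖v‖`, `η ≥ 1` and `(1 + η)δ < 1`,
and `η`-quasi-best approximations in `S` at each step, one has
`dist(u, S) ≤ ‖u - u^k‖` for all `k ≥ 1` and
`limsup ‖u^k - u‖ ≤ (η/(1 - (1 + η)δ)) dist(u, S)`. -/
theorem perturbed_gradient_algorithm_limsup {X : Type*}
    [NormedAddCommGroup X] [InnerProductSpace ℝ X] [CompleteSpace X]
    (S : Set X) (hS : S.Nonempty) (u : X) (B : X → X) (δ η : ℝ)
    (hδ0 : 0 ≤ δ) (hη : 1 ≤ η) (hδη : (1 + η) * δ < 1)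
    (hB : ∀ v : X, ‖B v‖ ≤ δ * ‖v‖)
    (useq : ℕ → X)
    (hstep : ∀ k : ℕ, useq (k + 1) ∈ S ∧
      ‖u + B (useq k - u) - useq (k + 1)‖ ≤ η * Metric.infDist (u + B (useq k - u)) S) :
    (∀ k : ℕ, 1 ≤ k → Metric.infDist u S ≤ ‖u - useq k‖) ∧
      Filter.limsup (fun k : ℕ => ‖useq k - u‖) Filter.atTop ≤
        (η / (1 - (1 + η) * δ)) * Metric.infDist u S := by
  set d := Metric.infDist u S with hd
  set ρ := (1 + η) * δ with hρ
  have hρ0 : 0 ≤ ρ := by positivity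
  have hρ1 : ρ < 1 := hδη
  have h1ρ : 0 < 1 - ρ := by linarith
  have hd0 : 0 ≤ d := Metric.infDist_nonneg
  have hη0 : 0 < η := by linarith
  set e : ℕ → ℝ := fun k => ‖useq k - u‖ with he
  -- key recursion
  have hrec : ∀ k, e (k + 1) ≤ η * d + ρ * e k := by
    intro k
    obtain ⟨hmem, hquasi⟩ := hstep k
    set z := u + B (useq k - u) with hz
    have hzu : ‖z - u‖ ≤ δ * e k := by
      have : z - u = B (useq k - u) := by simp [hz]
      rw [this]; exact hB _
    have hdz : Metric.infDist z S ≤ d + δ * e k := by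
      have := Metric.infDist_le_infDist_add_dist (x := z) (y := u) (s := S)
      have hdzu : dist z u ≤ δ * e k := by rwa [dist_eq_norm]
      linarith
    have : e (k + 1) ≤ ‖useq (k + 1) - z‖ + ‖z - u‖ := by
      have := norm_sub_le_norm_sub_add_norm_sub (useq (k + 1)) z u
      simpa [he] using this
    have h1 : ‖useq (k + 1) - z‖ ≤ η * (d + δ * e k) := by
      rw [norm_sub_rev]
      exact hquasi.trans (by
        have := mul_le_mul_of_nonneg_left hdz (le_of_lt hη0)
        simpa [hz] using this)
    have hek : 0 ≤ e k := norm_nonneg _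
    nlinarith
  -- geometric bound
  have hbound : ∀ k, e k ≤ ρ ^ k * e 0 + η * d / (1 - ρ) := by
    intro k
    induction k with
    | zero => simp; positivity
    | succ n ih =>
      have := hrec n
      have h0 : 0 ≤ ρ ^ n * e 0 := by positivity
      have : e (n + 1) ≤ η * d + ρ * (ρ ^ n * e 0 + η * d / (1 - ρ)) := by
        have := mul_le_mul_of_nonneg_left ih hρ0
        linarith [hrec n]
      have key : η * d + ρ * (η * d / (1 - ρ)) = η * d / (1 - ρ) := by
        field_simp; ring
      calc e (n + 1) ≤ η * d + ρ * (ρ ^ n * e 0 + η * d / (1 - ρ)) := this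
        _ = ρ ^ (n + 1) * e 0 + (η * d + ρ * (η * d / (1 - ρ))) := by ring
        _ = ρ ^ (n + 1) * e 0 + η * d / (1 - ρ) := by rw [key]
  constructor
  · intro k hk
    obtain ⟨m, rfl⟩ := Nat.exists_eq_add_of_le hk
    have hmem := (hstep (m)).1
    have : useq (1 + m) ∈ S := by
      have := (hstep m).1
      simpa [Nat.add_comm] using this
    simpa [hd, dist_eq_norm] using Metric.infDist_le_dist_of_mem this
  · -- limsup bound
    set g : ℕ → ℝ := fun k => ρ ^ k * e 0 + η * d / (1 - ρ) with hg
    have hgt : Tendsto g atTop (nhds (η * d / (1 - ρ))) := by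
      have h1 : Tendsto (fun k : ℕ => ρ ^ k) atTop (nhds 0) :=
        tendsto_pow_atTop_nhds_zero_of_lt_one hρ0 hρ1
      have h2 : Tendsto (fun k : ℕ => ρ ^ k * e 0 + η * d / (1 - ρ)) atTop
          (nhds (0 * e 0 + η * d / (1 - ρ))) := (h1.mul_const _).add_const _
      simpa using h2
    have hls : limsup e atTop ≤ limsup g atTop := by
      have hbd : IsBoundedUnder (· ≥ ·) atTop e :=
        isBoundedUnder_of ⟨0, fun k => norm_nonneg (useq k - u)⟩
      have hcb : IsCoboundedUnder (· ≤ ·) atTop e := hbd.isCoboundedUnder_le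
      exact limsup_le_limsup (Eventually.of_forall hbound) hcb hgt.isBoundedUnder_le
    have hgeq : limsup g atTop = η * d / (1 - ρ) := hgt.limsup_eq
    calc limsup e atTop ≤ η * d / (1 - ρ) := by rw [← hgeq]; exact hls
      _ = η / (1 - ρ) * d := by ring
end

section
/- (Weak greedy algorithm: comparison of exact and quasi-optimal corrections.) In the weak greedy setting, suppose in addition that for each m ≥ 1 there is a best approximation w_m of f_{m−1} in S, i.e. w_m ∈ S with ‖f_{m−1} − w_m‖ = dist(f_{m−1}, S). Then for every m ≥ 1: μ_m ‖w_m‖ ≤ κ_m ‖w̃_m‖ ≤ ‖w_m‖, and μ_m / 2 ≤ κ_m. -/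
open scoped RealInnerProductSpace

private lemma wg_aux_sq_le (x y : ℝ) (hx : 0 ≤ x) (hy : 0 ≤ y) (h : x ^ 2 ≤ y ^ 2) :
    x ≤ y := (pow_le_pow_iff_left₀ hx hy two_ne_zero).mp h

private lemma wg_aux_two (a b c : ℝ) (hb : 0 < b) (hcross : a ^ 2 ≤ c ^ 2 * b ^ 2) :
    2 * a - b ^ 2 ≤ c ^ 2 := by nlinarith [sq_nonneg (a - b ^ 2), pow_pos hb 2]

private lemma wg_aux_a_pos (a b : ℝ) (hb : 0 < b) (h : 0 < 2 * a - b ^ 2) : 0 < a := by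
  nlinarith

private lemma wg_aux_acb (a b c : ℝ) (hb : 0 < b) (hc : 0 < c) (ha : 0 < a)
    (hcross : a ^ 2 ≤ c ^ 2 * b ^ 2) : a ≤ c * b := by
  nlinarith [mul_pos hc hb]

private lemma wg_aux_b2c (a b c : ℝ) (hb : 0 < b) (hc : 0 < c) (h2ab : 0 < 2 * a - b ^ 2)
    (hacb : a ≤ c * b) : b ≤ 2 * c := by nlinarith

/-- Weak greedy algorithm, comparison of exact and quasi-optimal corrections: if `w_m` is
a best approximation of `f_{m-1}` in `S`, then `μ_m ‖w_m‖ ≤ κ_m ‖w̃_m‖ ≤ ‖w_m‖` and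
`μ_m / 2 ≤ κ_m`. -/
theorem weak_greedy_correction_comparison {X : Type*}
    [NormedAddCommGroup X] [InnerProductSpace ℝ X] [CompleteSpace X]
    (S : Set X) (hS : S.Nonempty) (hScone : ∀ (c : ℝ), ∀ v ∈ S, c • v ∈ S)
    (u : X) (wt : ℕ → X) (hwtS : ∀ m : ℕ, wt (m + 1) ∈ S)
    (ut : ℕ → X) (hut0 : ut 0 = 0) (hutrec : ∀ m : ℕ, ut (m + 1) = ut m + wt (m + 1))
    (f : ℕ → X) (hf : ∀ m : ℕ, f m = u - ut m)
    (γ : ℕ → ℝ) (hγ : ∀ m : ℕ, 0 ≤ γ (m + 1))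
    (hquasi : ∀ m : ℕ, ‖f m - wt (m + 1)‖ ≤ (1 + γ (m + 1)) * Metric.infDist (f m) S)
    (hfpos : ∀ m : ℕ, 0 < ‖f m‖)
    (α : ℕ → ℝ) (hα : ∀ m : ℕ, α (m + 1) = Metric.infDist (f m) S / ‖f m‖)
    (hcond : ∀ m : ℕ, (1 + γ (m + 1)) * α (m + 1) < 1)
    (κ : ℕ → ℝ)
    (hκ : ∀ m : ℕ, κ (m + 1) = Real.sqrt (2 * ⟪f m, wt (m + 1)⟫ / ‖wt (m + 1)‖ ^ 2 - 1))
    (μ : ℕ → ℝ)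
    (hμ : ∀ m : ℕ, μ (m + 1) =
      Real.sqrt ((1 - (1 + γ (m + 1)) ^ 2 * α (m + 1) ^ 2) / (1 - α (m + 1) ^ 2)))
    (w : ℕ → X)
    (hw : ∀ m : ℕ, w (m + 1) ∈ S ∧ ‖f m - w (m + 1)‖ = Metric.infDist (f m) S) :
    ∀ m : ℕ,
      μ (m + 1) * ‖w (m + 1)‖ ≤ κ (m + 1) * ‖wt (m + 1)‖ ∧
      κ (m + 1) * ‖wt (m + 1)‖ ≤ ‖w (m + 1)‖ ∧
      μ (m + 1) / 2 ≤ κ (m + 1) := by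
  intro m
  obtain ⟨hw1, hw2⟩ := hw m
  set d := Metric.infDist (f m) S with hd
  have hd0 : 0 ≤ d := Metric.infDist_nonneg
  have hG : 0 < ‖f m‖ := hfpos m
  have hγm : 0 ≤ γ (m + 1) := hγ m
  have hcondm := hcond m
  rw [hα m, ← mul_div_assoc, div_lt_one hG] at hcondm
  -- hcondm : (1 + γ (m+1)) * d < ‖f m‖
  have hdG : d < ‖f m‖ := by nlinarith
  have key : ∀ (t : ℝ) (v : X), v ∈ S → d ≤ ‖f m - t • v‖ := by
    intro t v hv
    have hmem : t • v ∈ S := hScone t v hv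
    have h := Metric.infDist_le_dist_of_mem (x := f m) hmem
    rwa [dist_eq_norm] at h
  have expand : ∀ (t : ℝ) (v : X),
      ‖f m - t • v‖ ^ 2 = ‖f m‖ ^ 2 - 2 * t * ⟪f m, v⟫ + t ^ 2 * ‖v‖ ^ 2 := by
    intro t v
    rw [@norm_sub_sq_real, real_inner_smul_right, norm_smul]
    simp only [Real.norm_eq_abs, mul_pow, sq_abs]
    ring
  have keysq : ∀ (t : ℝ) (v : X), v ∈ S →
      d ^ 2 ≤ ‖f m‖ ^ 2 - 2 * t * ⟪f m, v⟫ + t ^ 2 * ‖v‖ ^ 2 := by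
    intro t v hv
    have := pow_le_pow_left₀ hd0 (key t v hv) 2
    rwa [expand t v] at this
  -- nontriviality
  have hwne : (0:ℝ) < ‖w (m + 1)‖ := by
    rcases eq_or_lt_of_le (norm_nonneg (w (m+1))) with h0 | h
    · exfalso
      have : w (m + 1) = 0 := by
        rwa [eq_comm, norm_eq_zero] at h0
      rw [this, sub_zero] at hw2
      nlinarith
    · exact h
  have hwtne : (0:ℝ) < ‖wt (m + 1)‖ := by
    rcases eq_or_lt_of_le (norm_nonneg (wt (m+1))) with h0 | h
    · exfalso
      have h1 : wt (m + 1) = 0 := by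
        rwa [eq_comm, norm_eq_zero] at h0
      have h2 := hquasi m
      rw [h1, sub_zero] at h2
      nlinarith
    · exact h
  set b := ‖wt (m + 1)‖ with hbdef
  set c := ‖w (m + 1)‖ with hcdef
  set a := ⟪f m, wt (m + 1)⟫ with hadef
  have hb2 : b ^ 2 ≠ 0 := by positivity
  have hc2 : c ^ 2 ≠ 0 := by positivity
  -- inner product with best approx equals its norm squared
  have hd2e : d ^ 2 = ‖f m‖ ^ 2 - 2 * ⟪f m, w (m+1)⟫ + c ^ 2 := by
    have := expand 1 (w (m+1))
    rw [one_smul] at this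
    rw [← hw2, this]; ring
  have pw : ⟪f m, w (m+1)⟫ = c ^ 2 := by
    have h1 := keysq (⟪f m, w (m+1)⟫ / c ^ 2) (w (m+1)) hw1
    have e : ‖f m‖ ^ 2 - 2 * (⟪f m, w (m+1)⟫ / c ^ 2) * ⟪f m, w (m+1)⟫
        + (⟪f m, w (m+1)⟫ / c ^ 2) ^ 2 * c ^ 2
        = ‖f m‖ ^ 2 - ⟪f m, w (m+1)⟫ ^ 2 / c ^ 2 := by
      field_simp; ring
    rw [e, hd2e] at h1
    have hsq : (⟪f m, w (m+1)⟫ - c ^ 2) ^ 2 ≤ 0 := by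
      have h2 : ⟪f m, w (m+1)⟫ ^ 2 / c ^ 2 ≤ 2 * ⟪f m, w (m+1)⟫ - c ^ 2 := by linarith
      have h3 : ⟪f m, w (m+1)⟫ ^ 2 ≤ (2 * ⟪f m, w (m+1)⟫ - c ^ 2) * c ^ 2 := by
        exact (div_le_iff₀ (show (0:ℝ) < c ^ 2 by positivity)).mp h2
      nlinarith
    have := sq_nonneg (⟪f m, w (m+1)⟫ - c ^ 2)
    have h0 : (⟪f m, w (m+1)⟫ - c ^ 2) ^ 2 = 0 := le_antisymm hsq this
    have := pow_eq_zero_iff (n := 2) (by norm_num) |>.mp h0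
    linarith [sub_eq_zero.mp this]
  have hd2 : d ^ 2 = ‖f m‖ ^ 2 - c ^ 2 := by rw [hd2e, pw]; ring
  -- cross bound
  have hcross : a ^ 2 ≤ c ^ 2 * b ^ 2 := by
    have h1 := keysq (a / b ^ 2) (wt (m+1)) (hwtS m)
    have e : ‖f m‖ ^ 2 - 2 * (a / b ^ 2) * a + (a / b ^ 2) ^ 2 * b ^ 2
        = ‖f m‖ ^ 2 - a ^ 2 / b ^ 2 := by field_simp; ring
    rw [e, hd2] at h1
    have h2 : a ^ 2 / b ^ 2 ≤ c ^ 2 := by linarith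
    have := (div_le_iff₀ (by positivity : (0:ℝ) < b ^ 2)).mp h2
    linarith
  -- quasi optimality squared
  have hq2 : ‖f m‖ ^ 2 - 2 * a + b ^ 2 ≤ (1 + γ (m+1)) ^ 2 * d ^ 2 := by
    have h1 := pow_le_pow_left₀ (norm_nonneg _) (hquasi m) 2
    have h2 := expand 1 (wt (m+1))
    rw [one_smul] at h2
    rw [h2] at h1
    calc ‖f m‖ ^ 2 - 2 * a + b ^ 2 = ‖f m‖ ^ 2 - 2 * 1 * a + 1 ^ 2 * b ^ 2 := by ring
    _ ≤ ((1 + γ (m+1)) * d) ^ 2 := h1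
    _ = (1 + γ (m+1)) ^ 2 * d ^ 2 := by ring
  have hkey2 : ‖f m‖ ^ 2 - (1 + γ (m+1)) ^ 2 * d ^ 2 ≤ 2 * a - b ^ 2 := by linarith
  have hpos2 : 0 < ‖f m‖ ^ 2 - (1 + γ (m+1)) ^ 2 * d ^ 2 := by
    have hx : 0 ≤ (1 + γ (m+1)) * d := mul_nonneg (by linarith) hd0
    nlinarith [mul_self_lt_mul_self hx hcondm]
  -- kappa
  have hKpos : 0 < 2 * a / b ^ 2 - 1 := by
    have : 0 < 2 * a - b ^ 2 := lt_of_lt_of_le hpos2 hkey2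
    rw [sub_pos, lt_div_iff₀ (show (0:ℝ) < b ^ 2 by positivity)]
    linarith
  have hκnn : 0 ≤ κ (m + 1) := by rw [hκ m]; exact Real.sqrt_nonneg _
  have hκsq : κ (m + 1) ^ 2 = 2 * a / b ^ 2 - 1 := by
    rw [hκ m]; exact Real.sq_sqrt hKpos.le
  have hκb : (κ (m + 1)) ^ 2 * b ^ 2 = 2 * a - b ^ 2 := by
    rw [hκsq]; field_simp
  -- mu
  have hαv := hα m
  have hden : 0 < 1 - (d / ‖f m‖) ^ 2 := by
    have h1 : d / ‖f m‖ < 1 := (div_lt_one hG).mpr hdG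
    have h2 : 0 ≤ d / ‖f m‖ := by positivity
    have h3 := mul_self_lt_mul_self h2 h1
    have h4 : (d / ‖f m‖) ^ 2 = (d / ‖f m‖) * (d / ‖f m‖) := by ring
    rw [h4]; linarith
  have hnum : 0 < 1 - (1 + γ (m+1)) ^ 2 * (d / ‖f m‖) ^ 2 := by
    have h1 : (1 + γ (m+1)) * (d / ‖f m‖) < 1 := by
      rw [← mul_div_assoc, div_lt_one hG]; exact hcondm
    have h2 : 0 ≤ (1 + γ (m+1)) * (d / ‖f m‖) := by positivity
    have h3 := mul_self_lt_mul_self h2 h1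
    have h4 : (1 + γ (m+1)) ^ 2 * (d / ‖f m‖) ^ 2
        = ((1 + γ (m+1)) * (d / ‖f m‖)) * ((1 + γ (m+1)) * (d / ‖f m‖)) := by ring
    rw [h4]; linarith
  have hμnn : 0 ≤ μ (m + 1) := by rw [hμ m]; exact Real.sqrt_nonneg _
  have hμsq : μ (m + 1) ^ 2
      = (1 - (1 + γ (m+1)) ^ 2 * (d / ‖f m‖) ^ 2) / (1 - (d / ‖f m‖) ^ 2) := by
    rw [hμ m, hαv]
    exact Real.sq_sqrt (le_of_lt (div_pos hnum hden))
  have hμc : μ (m + 1) ^ 2 * c ^ 2 = ‖f m‖ ^ 2 - (1 + γ (m+1)) ^ 2 * d ^ 2 := by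
    have hden' : (1 - (d / ‖f m‖) ^ 2) ≠ 0 := ne_of_gt hden
    have hc2' : c ^ 2 = ‖f m‖ ^ 2 - d ^ 2 := by linarith
    have e1 : μ (m + 1) ^ 2 * (1 - (d / ‖f m‖) ^ 2)
        = 1 - (1 + γ (m+1)) ^ 2 * (d / ‖f m‖) ^ 2 := by
      rw [hμsq]; exact div_mul_cancel₀ _ hden'
    field_simp [hG.ne'] at e1
    rw [hc2']
    linear_combination e1
  clear_value d b c a
  -- claim 1
  have claim1 : μ (m + 1) * c ≤ κ (m + 1) * b := by
    have h1 : (μ (m + 1) * c) ^ 2 ≤ (κ (m + 1) * b) ^ 2 := by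
      have : μ (m + 1) ^ 2 * c ^ 2 ≤ κ (m + 1) ^ 2 * b ^ 2 := by
        rw [hμc, hκb]; exact hkey2
      calc (μ (m + 1) * c) ^ 2 = μ (m + 1) ^ 2 * c ^ 2 := by ring
      _ ≤ κ (m + 1) ^ 2 * b ^ 2 := this
      _ = (κ (m + 1) * b) ^ 2 := by ring
    have h2 : 0 ≤ μ (m + 1) * c := mul_nonneg hμnn hwne.le
    have h3 : 0 ≤ κ (m + 1) * b := mul_nonneg hκnn hwtne.le
    exact wg_aux_sq_le _ _ h2 h3 h1
  -- claim 2
  have claim2 : κ (m + 1) * b ≤ c := by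
    have h1 : (κ (m + 1) * b) ^ 2 ≤ c ^ 2 := by
      have h2 : 2 * a - b ^ 2 ≤ c ^ 2 := wg_aux_two a b c hwtne hcross
      calc (κ (m + 1) * b) ^ 2 = κ (m + 1) ^ 2 * b ^ 2 := by ring
      _ = 2 * a - b ^ 2 := hκb
      _ ≤ c ^ 2 := h2
    have h3 : 0 ≤ κ (m + 1) * b := mul_nonneg hκnn hwtne.le
    exact wg_aux_sq_le _ _ h3 hwne.le h1
  -- claim 3
  have h2ab : 0 < 2 * a - b ^ 2 := lt_of_lt_of_le hpos2 hkey2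
  have ha0 : 0 < a := wg_aux_a_pos a b hwtne h2ab
  have hacb : a ≤ c * b := wg_aux_acb a b c hwtne hwne ha0 hcross
  have hb2c : b ≤ 2 * c := wg_aux_b2c a b c hwtne hwne h2ab hacb
  have claim3 : μ (m + 1) / 2 ≤ κ (m + 1) := by
    have h5 : κ (m + 1) * b ≤ κ (m + 1) * (2 * c) :=
      mul_le_mul_of_nonneg_left hb2c hκnn
    have h6 : μ (m + 1) * c ≤ κ (m + 1) * (2 * c) := le_trans claim1 h5
    have h7 : μ (m + 1) * c ≤ (2 * κ (m + 1)) * c := by linarith [h6]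
    have := le_of_mul_le_mul_right (by linarith [h7] : μ (m + 1) * c ≤ (2 * κ (m + 1)) * c) hwne
    linarith
  exact ⟨claim1, claim2, claim3⟩
end

section
/- In the weak greedy setting, suppose in addition that for each m ≥ 1 there is a best approximation w_m of f_{m−1} in S, i.e. w_m ∈ S with ‖f_{m−1} − w_m‖ = dist(f_{m−1}, S). Then for every m ≥ 1, ((κ_m² + 1)/2) · ‖w̃_m‖ ≤ ‖w_m‖. -/
open scoped RealInnerProductSpace

set_option maxHeartbeats 1000000 in
/-- Weak greedy algorithm: if `w_m` is a best approximation of `f_{m-1}` in `S`, then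
`((κ_m² + 1)/2) ‖w̃_m‖ ≤ ‖w_m‖`. -/
theorem weak_greedy_wt_le_w {X : Type*}
    [NormedAddCommGroup X] [InnerProductSpace ℝ X] [CompleteSpace X]
    (S : Set X) (hS : S.Nonempty) (hScone : ∀ (c : ℝ), ∀ v ∈ S, c • v ∈ S)
    (u : X) (wt : ℕ → X) (hwtS : ∀ m : ℕ, wt (m + 1) ∈ S)
    (ut : ℕ → X) (hut0 : ut 0 = 0) (hutrec : ∀ m : ℕ, ut (m + 1) = ut m + wt (m + 1))
    (f : ℕ → X) (hf : ∀ m : ℕ, f m = u - ut m)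
    (γ : ℕ → ℝ) (hγ : ∀ m : ℕ, 0 ≤ γ (m + 1))
    (hquasi : ∀ m : ℕ, ‖f m - wt (m + 1)‖ ≤ (1 + γ (m + 1)) * Metric.infDist (f m) S)
    (hfpos : ∀ m : ℕ, 0 < ‖f m‖)
    (α : ℕ → ℝ) (hα : ∀ m : ℕ, α (m + 1) = Metric.infDist (f m) S / ‖f m‖)
    (hcond : ∀ m : ℕ, (1 + γ (m + 1)) * α (m + 1) < 1)
    (κ : ℕ → ℝ)
    (hκ : ∀ m : ℕ, κ (m + 1) = Real.sqrt (2 * ⟪f m, wt (m + 1)⟫ / ‖wt (m + 1)‖ ^ 2 - 1))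
    (w : ℕ → X)
    (hw : ∀ m : ℕ, w (m + 1) ∈ S ∧ ‖f m - w (m + 1)‖ = Metric.infDist (f m) S) :
    ∀ m : ℕ, ((κ (m + 1) ^ 2 + 1) / 2) * ‖wt (m + 1)‖ ≤ ‖w (m + 1)‖ := by
  intro m
  set F := f m with hF
  set W := wt (m + 1) with hW
  set V := w (m + 1) with hV
  set d := Metric.infDist F S with hd
  have hd0 : 0 ≤ d := Metric.infDist_nonneg
  have hFpos : 0 < ‖F‖ := hfpos m
  -- projection inequality
  have key : ∀ v ∈ S, v ≠ 0 → d ^ 2 ≤ ‖F‖ ^ 2 - ⟪F, v⟫ ^ 2 / ‖v‖ ^ 2 := by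
    intro v hv hv0
    have hvn : (0 : ℝ) < ‖v‖ := norm_pos_iff.mpr hv0
    have hmem : (⟪F, v⟫ / ‖v‖ ^ 2) • v ∈ S := hScone _ v hv
    have h1 : d ≤ ‖F - (⟪F, v⟫ / ‖v‖ ^ 2) • v‖ := by
      have := Metric.infDist_le_dist_of_mem (x := F) hmem
      rwa [dist_eq_norm] at this
    have h2 : ‖F - (⟪F, v⟫ / ‖v‖ ^ 2) • v‖ ^ 2
        = ‖F‖ ^ 2 - 2 * ⟪F, (⟪F, v⟫ / ‖v‖ ^ 2) • v⟫ + ‖(⟪F, v⟫ / ‖v‖ ^ 2) • v‖ ^ 2 := by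
      rw [@norm_sub_sq_real]
    have h3 : ⟪F, (⟪F, v⟫ / ‖v‖ ^ 2) • v⟫ = (⟪F, v⟫ / ‖v‖ ^ 2) * ⟪F, v⟫ :=
      real_inner_smul_right _ _ _
    have h4 : ‖(⟪F, v⟫ / ‖v‖ ^ 2) • v‖ ^ 2 = (⟪F, v⟫ / ‖v‖ ^ 2) ^ 2 * ‖v‖ ^ 2 := by
      rw [norm_smul, mul_pow, Real.norm_eq_abs, sq_abs]
    have h5 : d ^ 2 ≤ ‖F - (⟪F, v⟫ / ‖v‖ ^ 2) • v‖ ^ 2 := by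
      apply pow_le_pow_left₀ hd0 h1
    rw [h2, h3, h4] at h5
    have hv2 : (0 : ℝ) < ‖v‖ ^ 2 := by positivity
    calc d ^ 2 ≤ ‖F‖ ^ 2 - 2 * (⟪F, v⟫ / ‖v‖ ^ 2 * ⟪F, v⟫)
        + (⟪F, v⟫ / ‖v‖ ^ 2) ^ 2 * ‖v‖ ^ 2 := h5
      _ = ‖F‖ ^ 2 - ⟪F, v⟫ ^ 2 / ‖v‖ ^ 2 := by field_simp; ring
  -- ‖F - W‖ < ‖F‖
  have hγd : (1 + γ (m + 1)) * d < ‖F‖ := by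
    have := hcond m
    rw [hα m] at this
    calc (1 + γ (m + 1)) * d = ((1 + γ (m + 1)) * (d / ‖F‖)) * ‖F‖ := by
          field_simp
      _ < 1 * ‖F‖ := by exact mul_lt_mul_of_pos_right this hFpos
      _ = ‖F‖ := one_mul _
  have hlt : ‖F - W‖ < ‖F‖ := lt_of_le_of_lt (hquasi m) hγd
  have hlt2 : ‖F - W‖ ^ 2 < ‖F‖ ^ 2 := by
    have h0 : 0 ≤ ‖F - W‖ := norm_nonneg _
    nlinarith
  have hexp : ‖F - W‖ ^ 2 = ‖F‖ ^ 2 - 2 * ⟪F, W⟫ + ‖W‖ ^ 2 := by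
    rw [@norm_sub_sq_real]
  have hWin : ‖W‖ ^ 2 < 2 * ⟪F, W⟫ := by nlinarith
  have hW0 : W ≠ 0 := by
    intro h
    rw [h] at hWin
    simp at hWin
  have hWn : (0 : ℝ) < ‖W‖ := norm_pos_iff.mpr hW0
  have hWn2 : (0 : ℝ) < ‖W‖ ^ 2 := by positivity
  have hiW : 0 < ⟪F, W⟫ := by nlinarith
  have harg : 0 ≤ 2 * ⟪F, W⟫ / ‖W‖ ^ 2 - 1 := by
    rw [sub_nonneg, le_div_iff₀ hWn2]
    nlinarith
  have hκ2 : κ (m + 1) ^ 2 = 2 * ⟪F, W⟫ / ‖W‖ ^ 2 - 1 := by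
    rw [hκ m, Real.sq_sqrt harg]
  -- the LHS equals ⟪F, W⟫ / ‖W‖
  have hLHS : ((κ (m + 1) ^ 2 + 1) / 2) * ‖W‖ = ⟪F, W⟫ / ‖W‖ := by
    rw [hκ2]; field_simp; ring
  rw [hLHS]
  -- best approximation facts
  obtain ⟨hVS, hVd⟩ := hw m
  have hVd' : d = ‖F - V‖ := hVd.symm
  have hVexp : d ^ 2 = ‖F‖ ^ 2 - 2 * ⟪F, V⟫ + ‖V‖ ^ 2 := by
    rw [hVd', @norm_sub_sq_real]
  have hVinner : ⟪F, V⟫ = ‖V‖ ^ 2 := by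
    by_cases hV0 : V = 0
    · rw [hV0]; simp
    · have hVn2 : (0 : ℝ) < ‖V‖ ^ 2 := pow_pos (norm_pos_iff.mpr hV0) 2
      have h := key V hVS hV0
      have h2 : ⟪F, V⟫ ^ 2 / ‖V‖ ^ 2 - 2 * ⟪F, V⟫ + ‖V‖ ^ 2 ≤ 0 := by nlinarith
      have h3 : (⟪F, V⟫ - ‖V‖ ^ 2) ^ 2 ≤ 0 := by
        have expand : (⟪F, V⟫ - ‖V‖ ^ 2) ^ 2
            = (⟪F, V⟫ ^ 2 / ‖V‖ ^ 2 - 2 * ⟪F, V⟫ + ‖V‖ ^ 2) * ‖V‖ ^ 2 := by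
          field_simp
          ring
        rw [expand]
        exact mul_nonpos_iff.mpr (Or.inr ⟨h2, le_of_lt hVn2⟩)
      have h4 : (⟪F, V⟫ - ‖V‖ ^ 2) ^ 2 = 0 := le_antisymm h3 (sq_nonneg _)
      have h5 : ⟪F, V⟫ - ‖V‖ ^ 2 = 0 := by
        have := sq_eq_zero_iff.mp h4
        exact this
      linarith
  have hVsq : ‖V‖ ^ 2 = ‖F‖ ^ 2 - d ^ 2 := by
    rw [hVinner] at hVexp; linarith
  have hkeyW := key W (hwtS m) hW0
  -- ⟪F, W⟫ ^ 2 / ‖W‖ ^ 2 ≤ ‖V‖ ^ 2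
  have hsq : ⟪F, W⟫ ^ 2 / ‖W‖ ^ 2 ≤ ‖V‖ ^ 2 := by rw [hVsq]; linarith
  have hV0 : (0 : ℝ) ≤ ‖V‖ := norm_nonneg _
  have hgoalsq : (⟪F, W⟫ / ‖W‖) ^ 2 ≤ ‖V‖ ^ 2 := by
    rw [div_pow]; exact hsq
  nlinarith [div_nonneg (le_of_lt hiW) (le_of_lt hWn)]
end

section
/- (Weak greedy algorithm: if the errors converge, they converge to zero.) In the weak greedy setting, suppose in addition that the linear span of S is dense in X, that for each m ≥ 1 there is a best approximation w_m of f_{m−1} in S, and that Σ_{m≥1} μ_m² = ∞. If the sequence (f_m)_{m≥1} converges in X, then its limit is 0. -/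
/-!
If `f_m → L ≠ 0`, pick a unit vector `s ∈ S` with `⟪L, s⟫ ≠ 0` (possible since `span S` is dense).
Projecting `f_{m-1}` onto the line through `s` bounds `dist(f_{m-1}, S)² ≤ ‖f_{m-1}‖² - ⟪f_{m-1}, s⟫²`,
and the definition of `μ_m` turns quasi-optimality into
`μ_m² ⟪f_{m-1}, s⟫² ≤ ‖f_{m-1}‖² - ‖f_m‖²`.
The right-hand side telescopes, while `⟪f_{m-1}, s⟫²` is eventually bounded below by `⟪L, s⟫² / 2`,
so `Σ μ_m²` would converge.
-/

open scoped RealInnerProductSpace Topology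
open Filter

theorem summable_of_mul_le_sub_succ {a b e : ℕ → ℝ} {c : ℝ} (ha : ∀ m, 0 ≤ a m)
    (hb : ∀ m, 0 ≤ b m) (he : ∀ m, 0 ≤ e m) (hc : 0 < c) (hce : ∀ᶠ m in atTop, c ≤ e m)
    (hstep : ∀ m, b m * e m ≤ a m - a (m + 1)) : Summable b := by
  have hdiff : ∀ m, 0 ≤ a m - a (m + 1) := fun m =>
    (mul_nonneg (hb m) (he m)).trans (hstep m)
  have htele : Summable fun m => a m - a (m + 1) :=
    summable_of_sum_range_le (c := a 0) hdiff fun n => by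
      rw [Finset.sum_range_sub']
      linarith [ha n]
  refine (htele.div_const c).of_norm_bounded_eventually_nat ?_
  filter_upwards [hce] with m hm
  rw [Real.norm_of_nonneg (hb m), le_div_iff₀ hc]
  exact (mul_le_mul_of_nonneg_left hm (hb m)).trans (hstep m)

theorem sq_mul_one_sub_sq_eq {μ α c : ℝ} (hα : 0 ≤ α) (hc : 1 ≤ c) (hcα : c * α < 1)
    (hμ : μ = √((1 - c ^ 2 * α ^ 2) / (1 - α ^ 2))) :
    μ ^ 2 * (1 - α ^ 2) = 1 - c ^ 2 * α ^ 2 := by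
  have hα1 : α < 1 := by nlinarith
  have hden : 0 < 1 - α ^ 2 := by nlinarith
  have hnum : 0 ≤ 1 - c ^ 2 * α ^ 2 := by nlinarith [mul_nonneg (zero_le_one.trans hc) hα]
  rw [hμ, Real.sq_sqrt (div_nonneg hnum hden.le), div_mul_cancel₀ _ hden.ne']

section Cone

variable {X : Type*} [NormedAddCommGroup X] [InnerProductSpace ℝ X] {S : Set X}

theorem exists_inner_ne_zero_of_dense_span (hdense : Dense (Submodule.span ℝ S : Set X))
    {L : X} (hL : L ≠ 0) : ∃ s ∈ S, ⟪L, s⟫ ≠ 0 := by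
  by_contra! h
  refine hL (hdense.eq_zero_of_inner_left ℝ fun v hv => ?_)
  exact (Submodule.span_le (p := LinearMap.ker (innerₛₗ ℝ L))).2 h hv

theorem exists_norm_eq_one_mem_inner_ne_zero (hS : ∀ (c : ℝ), ∀ v ∈ S, c • v ∈ S)
    (hdense : Dense (Submodule.span ℝ S : Set X)) {L : X} (hL : L ≠ 0) :
    ∃ s ∈ S, ‖s‖ = 1 ∧ ⟪L, s⟫ ≠ 0 := by
  obtain ⟨s, hsS, hLs⟩ := exists_inner_ne_zero_of_dense_span hdense hL
  have hs : ‖s‖ ≠ 0 := norm_ne_zero_iff.2 fun h => hLs (by simp [h])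
  refine ⟨‖s‖⁻¹ • s, hS _ _ hsS, ?_, ?_⟩
  · rw [norm_smul, norm_inv, norm_norm, inv_mul_cancel₀ hs]
  · rw [real_inner_smul_right]
    exact mul_ne_zero (inv_ne_zero hs) hLs

theorem inner_sq_le_norm_sq_sub_infDist_sq (hS : ∀ (c : ℝ), ∀ v ∈ S, c • v ∈ S) {s : X}
    (hsS : s ∈ S) (hs : ‖s‖ = 1) (x : X) :
    ⟪x, s⟫ ^ 2 ≤ ‖x‖ ^ 2 - Metric.infDist x S ^ 2 := by
  have hle : Metric.infDist x S ≤ ‖x - ⟪x, s⟫ • s‖ := by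
    rw [← dist_eq_norm]
    exact Metric.infDist_le_dist_of_mem (hS _ _ hsS)
  have hproj : ‖x - ⟪x, s⟫ • s‖ ^ 2 = ‖x‖ ^ 2 - ⟪x, s⟫ ^ 2 := by
    rw [norm_sub_sq_real, real_inner_smul_right, norm_smul, hs, Real.norm_eq_abs]
    ring_nf
    rw [sq_abs]
    ring
  nlinarith [Metric.infDist_nonneg (x := x) (s := S)]

theorem norm_sq_sub_norm_sq_ge_of_quasi_optimal (hS : ∀ (c : ℝ), ∀ v ∈ S, c • v ∈ S) {s : X} (hsS : s ∈ S)
    (hs : ‖s‖ = 1) {x y : X} {α c μ : ℝ} (hx : 0 < ‖x‖)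
    (hα : α = Metric.infDist x S / ‖x‖) (hc : 1 ≤ c) (hcα : c * α < 1)
    (hμ : μ = √((1 - c ^ 2 * α ^ 2) / (1 - α ^ 2))) (hy : ‖y‖ ≤ c * Metric.infDist x S) :
    μ ^ 2 * ⟪x, s⟫ ^ 2 ≤ ‖x‖ ^ 2 - ‖y‖ ^ 2 := by
  have hd : Metric.infDist x S = α * ‖x‖ := by rw [hα, div_mul_cancel₀ _ hx.ne']
  have hα0 : 0 ≤ α := hα ▸ div_nonneg Metric.infDist_nonneg hx.le
  have hy2 : ‖y‖ ^ 2 ≤ (c * Metric.infDist x S) ^ 2 := pow_le_pow_left₀ (norm_nonneg y) hy 2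
  calc μ ^ 2 * ⟪x, s⟫ ^ 2 ≤ μ ^ 2 * (‖x‖ ^ 2 - Metric.infDist x S ^ 2) :=
        mul_le_mul_of_nonneg_left (inner_sq_le_norm_sq_sub_infDist_sq hS hsS hs x) (sq_nonneg μ)
    _ = μ ^ 2 * (1 - α ^ 2) * ‖x‖ ^ 2 := by rw [hd]; ring
    _ = ‖x‖ ^ 2 - (c * Metric.infDist x S) ^ 2 := by
        rw [sq_mul_one_sub_sq_eq hα0 hc hcα hμ, hd]; ring
    _ ≤ ‖x‖ ^ 2 - ‖y‖ ^ 2 := by linarith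

end Cone

theorem weak_greedy_limit_zero_general {X : Type*}
    [NormedAddCommGroup X] [InnerProductSpace ℝ X]
    (S : Set X) (hScone : ∀ (c : ℝ), ∀ v ∈ S, c • v ∈ S)
    (hdense : Dense (Submodule.span ℝ S : Set X))
    (u : X) (wt : ℕ → X)
    (ut : ℕ → X) (hutrec : ∀ m : ℕ, ut (m + 1) = ut m + wt (m + 1))
    (f : ℕ → X) (hf : ∀ m : ℕ, f m = u - ut m)
    (γ : ℕ → ℝ) (hγ : ∀ m : ℕ, 0 ≤ γ (m + 1))
    (hquasi : ∀ m : ℕ, ‖f m - wt (m + 1)‖ ≤ (1 + γ (m + 1)) * Metric.infDist (f m) S)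
    (hfpos : ∀ m : ℕ, 0 < ‖f m‖)
    (α : ℕ → ℝ) (hα : ∀ m : ℕ, α (m + 1) = Metric.infDist (f m) S / ‖f m‖)
    (hcond : ∀ m : ℕ, (1 + γ (m + 1)) * α (m + 1) < 1)
    (μ : ℕ → ℝ)
    (hμ : ∀ m : ℕ, μ (m + 1) =
      Real.sqrt ((1 - (1 + γ (m + 1)) ^ 2 * α (m + 1) ^ 2) / (1 - α (m + 1) ^ 2)))
    (hμsum : ¬ Summable (fun m : ℕ => μ (m + 1) ^ 2)) :
    ∀ L : X, Filter.Tendsto f Filter.atTop (𝓝 L) → L = 0 := by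
  intro L hL
  by_contra hL0
  obtain ⟨s, hsS, hs, hLs⟩ := exists_norm_eq_one_mem_inner_ne_zero hScone hdense hL0
  have hfrec : ∀ m, f (m + 1) = f m - wt (m + 1) := fun m => by
    rw [hf, hf, hutrec]
    abel
  have hstep : ∀ m, μ (m + 1) ^ 2 * ⟪f m, s⟫ ^ 2 ≤ ‖f m‖ ^ 2 - ‖f (m + 1)‖ ^ 2 := fun m =>
    norm_sq_sub_norm_sq_ge_of_quasi_optimal hScone hsS hs (hfpos m) (hα m) (by linarith [hγ m]) (hcond m) (hμ m)
      (hfrec m ▸ hquasi m)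
  have hLs2 : 0 < ⟪L, s⟫ ^ 2 := pow_pos (abs_pos.2 hLs) 2 |>.trans_eq (sq_abs _)
  have hinner : ∀ᶠ m in atTop, ⟪L, s⟫ ^ 2 / 2 ≤ ⟪f m, s⟫ ^ 2 :=
    ((((continuous_id.inner continuous_const).pow 2).tendsto L).comp hL).eventually
      (eventually_ge_nhds (half_lt_self hLs2))
  exact hμsum (summable_of_mul_le_sub_succ (fun m => sq_nonneg ‖f m‖) (fun m => sq_nonneg _)
    (fun m => sq_nonneg _) (half_pos hLs2) hinner hstep)

/-- Weak greedy algorithm: if the span of `S` is dense, best approximations in `S` exist,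
and `Σ μ_m² = ∞` (i.e. `(μ_m²)` is not summable), then any limit of the error sequence
`(f_m)` must be zero. -/
theorem weak_greedy_limit_zero {X : Type*}
    [NormedAddCommGroup X] [InnerProductSpace ℝ X] [CompleteSpace X]
    (S : Set X) (hS : S.Nonempty) (hScone : ∀ (c : ℝ), ∀ v ∈ S, c • v ∈ S)
    (hdense : Dense (Submodule.span ℝ S : Set X))
    (u : X) (wt : ℕ → X) (hwtS : ∀ m : ℕ, wt (m + 1) ∈ S)
    (ut : ℕ → X) (hut0 : ut 0 = 0) (hutrec : ∀ m : ℕ, ut (m + 1) = ut m + wt (m + 1))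
    (f : ℕ → X) (hf : ∀ m : ℕ, f m = u - ut m)
    (γ : ℕ → ℝ) (hγ : ∀ m : ℕ, 0 ≤ γ (m + 1))
    (hquasi : ∀ m : ℕ, ‖f m - wt (m + 1)‖ ≤ (1 + γ (m + 1)) * Metric.infDist (f m) S)
    (hfpos : ∀ m : ℕ, 0 < ‖f m‖)
    (α : ℕ → ℝ) (hα : ∀ m : ℕ, α (m + 1) = Metric.infDist (f m) S / ‖f m‖)
    (hcond : ∀ m : ℕ, (1 + γ (m + 1)) * α (m + 1) < 1)
    (μ : ℕ → ℝ)
    (hμ : ∀ m : ℕ, μ (m + 1) =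
      Real.sqrt ((1 - (1 + γ (m + 1)) ^ 2 * α (m + 1) ^ 2) / (1 - α (m + 1) ^ 2)))
    (w : ℕ → X)
    (hw : ∀ m : ℕ, w (m + 1) ∈ S ∧ ‖f m - w (m + 1)‖ = Metric.infDist (f m) S)
    (hμsum : ¬ Summable (fun m : ℕ => μ (m + 1) ^ 2)) :
    ∀ L : X, Filter.Tendsto f Filter.atTop (𝓝 L) → L = 0 :=
  weak_greedy_limit_zero_general S hScone hdense u wt ut hutrec f hf γ hγ hquasi hfpos α hα hcond μ
    hμ hμsum
end

section
/- (Convergence of the weak greedy algorithm.) In the weak greedy setting, suppose in addition that the linear span of S is dense in X, that for each m ≥ 1 there is a best approximation w_m of f_{m−1} in S, that the sequence (μ_m)_{m≥1} is non-increasing, and that Σ_{m≥1} μ_m²/m = ∞. Then the sequence (u_m)_{m≥1} converges to u (equivalently, f_m → 0). -/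
/-!
Let `s_m = ‖w_m‖`. Best approximation from a set closed under scaling gives
`|⟪f_{m-1}, v⟫| ≤ s_m ‖v‖` for `v ∈ S` and `s_m² = (1 - α_m²) ‖f_{m-1}‖²`, hence
`μ_m² s_m² ≤ ‖f_{m-1}‖² - ‖f_m‖²` and `∑ μ_m² s_m² ≤ ‖u‖²`. If `‖f_m‖` decreased to some
`ρ > 0`, expanding `‖f_m‖² = ⟪f_m, u - Σ_{k ≤ m} w̃_k⟫` against an element of `span S` close to `u`
gives `ρ² / 2 ≤ s_m T_m` with `T_m = C + 2 Σ_{k<m} s_k`. Then `T_m² ≳ m` while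
`log T_{m+1} - log T_m ≲ s_m²`, and summation by parts against the non-increasing `μ_m²`
yields `∑ μ_m² / m < ∞`.
-/

open scoped RealInnerProductSpace Topology
open Finset Filter

lemma sq_add_mul_le_sq_of_succ {c : ℝ} {T σ : ℕ → ℝ} (hσ : ∀ m, 0 ≤ σ m)
    (hT : ∀ m, T (m + 1) = T m + 2 * σ m) (hc : ∀ m, c ≤ σ m * T m) (m : ℕ) :
    T 0 ^ 2 + 4 * c * m ≤ T m ^ 2 := by
  induction m with
  | zero => simp
  | succ m ih =>
    rw [hT m]
    push_cast
    nlinarith [hc m, hσ m]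

lemma log_add_sub_log_le {c T σ : ℝ} (hc : 0 < c) (hT : 0 < T) (hcσ : c ≤ σ * T) :
    Real.log (T + 2 * σ) - Real.log T ≤ 2 / c * σ ^ 2 := by
  have hσ : 0 < σ := pos_of_mul_pos_left (hc.trans_le hcσ) hT.le
  calc Real.log (T + 2 * σ) - Real.log T = Real.log ((T + 2 * σ) / T) := by
        rw [Real.log_div (by positivity) hT.ne']
    _ ≤ (T + 2 * σ) / T - 1 := Real.log_le_sub_one_of_pos (by positivity)
    _ = 2 * σ / T := by field_simp; ring
    _ ≤ 2 / c * σ ^ 2 := by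
        rw [div_le_iff₀ hT]
        have : 2 / c * σ ^ 2 * T = 2 * σ * (σ * T) / c := by ring
        rw [this, le_div_iff₀ hc]
        nlinarith

lemma inv_succ_le_mul_log_sub_log {a b : ℝ} (ha : 0 < a) (hb : 0 < b) (m : ℕ) :
    ((m : ℝ) + 1)⁻¹ ≤ (a + b) / b * (Real.log (a + b * (m + 1)) - Real.log (a + b * m)) := by
  have h₀ : 0 < a + b * m := by positivity
  have h₁ : 0 < a + b * (m + 1) := by positivity
  have hlog : b / (a + b * (m + 1)) ≤ Real.log (a + b * (m + 1)) - Real.log (a + b * m) := by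
    rw [← Real.log_div h₁.ne' h₀.ne']
    convert Real.one_sub_inv_le_log_of_pos (div_pos h₁ h₀) using 1
    field_simp
    ring
  calc ((m : ℝ) + 1)⁻¹ = (a + b) / b * (b / ((a + b) * (m + 1))) := by field_simp
    _ ≤ (a + b) / b * (b / (a + b * (m + 1))) := by
        gcongr
        nlinarith [(Nat.cast_nonneg m : (0 : ℝ) ≤ m)]
    _ ≤ _ := by gcongr

lemma mul_sub_mul_le_sum_mul_sub {q D : ℕ → ℝ} (hqa : Antitone q)
    (hD : ∀ m, 0 ≤ D m) (M : ℕ) :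
    q M * D M - q 0 * D 0 ≤ ∑ m ∈ range M, q m * (D (m + 1) - D m) := by
  induction M with
  | zero => simp
  | succ M ih =>
    rw [sum_range_succ]
    nlinarith [mul_le_mul_of_nonneg_right (hqa M.le_succ) (hD (M + 1))]

lemma summable_of_le_mul_sub {a q Λ L : ℕ → ℝ} {K B : ℝ} (ha : ∀ m, 0 ≤ a m)
    (hq : ∀ m, 0 ≤ q m) (hqa : Antitone q) (hΛL : ∀ m, Λ m ≤ L m) (hK : 0 ≤ K)
    (haΛ : ∀ m, a m ≤ K * (q m * (Λ (m + 1) - Λ m)))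
    (hL : ∀ M, ∑ m ∈ range M, q m * (L (m + 1) - L m) ≤ B) :
    Summable a := by
  refine summable_of_sum_range_le ha (c := K * (B + q 0 * (L 0 - Λ 0))) fun M => ?_
  have habel := mul_sub_mul_le_sum_mul_sub hqa (fun m => sub_nonneg.2 (hΛL m)) M
  calc ∑ m ∈ range M, a m ≤ ∑ m ∈ range M, K * (q m * (Λ (m + 1) - Λ m)) :=
        sum_le_sum fun m _ => haΛ m
    _ ≤ _ := by
        rw [← mul_sum]
        gcongr
        have := hL M
        simp only [mul_sub, sum_sub_distrib] at habel this ⊢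
        nlinarith [mul_nonneg (hq M) (sub_nonneg.2 (hΛL M))]

/-- `log T_m` is compared with `log (C² + 4 c m) / 2`, whose increments are of order `1 / m`,
while its own increments are controlled by `σ_m²`. -/
lemma summable_div_succ_of_sum_mul_sq_le {c B C : ℝ} (hc : 0 < c) (hC : 0 < C)
    {q σ : ℕ → ℝ} (hq : ∀ m, 0 ≤ q m) (hqa : Antitone q) (hσ : ∀ m, 0 ≤ σ m)
    (hsum : ∀ M, ∑ m ∈ range M, q m * σ m ^ 2 ≤ B)
    (hlb : ∀ m, c ≤ σ m * (C + 2 * ∑ k ∈ range m, σ k)) :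
    Summable fun m : ℕ => q m / (m + 1) := by
  set T : ℕ → ℝ := fun m => C + 2 * ∑ k ∈ range m, σ k
  have hT : ∀ m, T (m + 1) = T m + 2 * σ m := fun m => by
    simp only [T, sum_range_succ]; ring
  have hTpos : ∀ m, 0 < T m := fun m => by
    have := sum_nonneg fun k (_ : k ∈ range m) => hσ k
    simp only [T]; linarith
  set L : ℕ → ℝ := fun m => 2 * Real.log (T m)
  set Λ : ℕ → ℝ := fun m => Real.log (C ^ 2 + 4 * c * m)
  have hΛL : ∀ m, Λ m ≤ L m := fun m => by
    have := sq_add_mul_le_sq_of_succ hσ hT hlb m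
    rw [show T 0 = C by simp [T]] at this
    simp only [Λ, L]
    rw [show 2 * Real.log (T m) = Real.log (T m ^ 2) by rw [Real.log_pow]; norm_num]
    exact Real.log_le_log (by positivity) this
  have hLstep : ∀ m, q m * (L (m + 1) - L m) ≤ 4 / c * (q m * σ m ^ 2) := fun m => by
    have := log_add_sub_log_le hc (hTpos m) (hlb m)
    calc q m * (L (m + 1) - L m) = 2 * (q m * (Real.log (T m + 2 * σ m) - Real.log (T m))) := by
          simp only [L, hT m]; ring
      _ ≤ 2 * (q m * (2 / c * σ m ^ 2)) := by gcongr; exact hq m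
      _ = 4 / c * (q m * σ m ^ 2) := by ring
  refine summable_of_le_mul_sub (B := 4 / c * B) (fun m => by have := hq m; positivity) hq hqa
    hΛL (by positivity : 0 ≤ (C ^ 2 + 4 * c) / (4 * c)) (fun m => ?_) (fun M => ?_)
  · have := inv_succ_le_mul_log_sub_log (sq_pos_of_pos hC) (by positivity : 0 < 4 * c) m
    simp only [Λ]
    push_cast
    rw [div_eq_mul_inv]
    nlinarith [hq m]
  · calc _ ≤ ∑ m ∈ range M, 4 / c * (q m * σ m ^ 2) := sum_le_sum fun m _ => hLstep m
      _ ≤ 4 / c * B := by rw [← mul_sum]; gcongr; exact hsum M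

/-- The factor `μ_m = weakGreedyFactor γ_m α_m`. -/
noncomputable def weakGreedyFactor (γ α : ℝ) : ℝ :=
  √((1 - (1 + γ) ^ 2 * α ^ 2) / (1 - α ^ 2))

section

variable {X : Type*} [NormedAddCommGroup X] [InnerProductSpace ℝ X]

def IsBestApprox (S : Set X) (x w : X) : Prop := w ∈ S ∧ ‖x - w‖ = Metric.infDist x S

namespace IsBestApprox

variable {S : Set X} {x w : X}

/-- Minimality of `‖x - w‖` along the line `ℝ • v` makes a quadratic in `t` nonnegative;
its discriminant gives the bound. -/
lemma inner_sq_le (hS : ∀ (c : ℝ), ∀ v ∈ S, c • v ∈ S) (h : IsBestApprox S x w) {v : X}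
    (hv : v ∈ S) : ⟪x, v⟫ ^ 2 ≤ (‖x‖ ^ 2 - ‖x - w‖ ^ 2) * ‖v‖ ^ 2 := by
  have hquad : ∀ t : ℝ, 0 ≤ ‖v‖ ^ 2 * (t * t) + (-2 * ⟪x, v⟫) * t + (‖x‖ ^ 2 - ‖x - w‖ ^ 2) := by
    intro t
    have hmin : ‖x - w‖ ≤ ‖x - t • v‖ := by
      rw [h.2, ← dist_eq_norm]
      exact Metric.infDist_le_dist_of_mem (hS t v hv)
    have := pow_le_pow_left₀ (norm_nonneg _) hmin 2
    rw [norm_sub_sq_real x (t • v), real_inner_smul_right, norm_smul, Real.norm_eq_abs, mul_pow,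
      sq_abs] at this
    linarith
  have := discrim_le_zero hquad
  rw [discrim] at this
  linarith

lemma inner_self_eq (hS : ∀ (c : ℝ), ∀ v ∈ S, c • v ∈ S) (h : IsBestApprox S x w) :
    ⟪x, w⟫ = ‖w‖ ^ 2 := by
  have hw := h.inner_sq_le hS h.1
  rw [norm_sub_sq_real] at hw
  nlinarith [sq_nonneg (⟪x, w⟫ - ‖w‖ ^ 2)]

lemma norm_sub_sq (hS : ∀ (c : ℝ), ∀ v ∈ S, c • v ∈ S) (h : IsBestApprox S x w) :
    ‖x - w‖ ^ 2 = ‖x‖ ^ 2 - ‖w‖ ^ 2 := by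
  rw [norm_sub_sq_real, h.inner_self_eq hS]
  ring

lemma abs_inner_le (hS : ∀ (c : ℝ), ∀ v ∈ S, c • v ∈ S) (h : IsBestApprox S x w) {v : X}
    (hv : v ∈ S) : |⟪x, v⟫| ≤ ‖w‖ * ‖v‖ := by
  have := h.inner_sq_le hS hv
  rw [h.norm_sub_sq hS, sub_sub_cancel, ← mul_pow] at this
  exact abs_le_of_sq_le_sq this (by positivity)

lemma weakGreedyFactor_sq_mul_norm_sq_le {y : X} {γ : ℝ}
    (hS : ∀ (c : ℝ), ∀ v ∈ S, c • v ∈ S) (h : IsBestApprox S x w) (hγ : 0 ≤ γ) (hx : 0 < ‖x‖)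
    (hy : ‖y‖ ≤ (1 + γ) * Metric.infDist x S)
    (hcond : (1 + γ) * (Metric.infDist x S / ‖x‖) < 1) :
    weakGreedyFactor γ (Metric.infDist x S / ‖x‖) ^ 2 * ‖w‖ ^ 2 ≤ ‖x‖ ^ 2 - ‖y‖ ^ 2 := by
  set d := Metric.infDist x S
  set α := d / ‖x‖
  have hd : d = α * ‖x‖ := (div_mul_cancel₀ _ hx.ne').symm
  have hα0 : 0 ≤ α := div_nonneg Metric.infDist_nonneg hx.le
  have hγα : 0 ≤ (1 + γ) * α := by positivity
  have hγα1 : (1 + γ) ^ 2 * α ^ 2 < 1 := by nlinarith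
  have hα1 : α ^ 2 < 1 := by nlinarith
  have hw : ‖w‖ ^ 2 = (1 - α ^ 2) * ‖x‖ ^ 2 := by
    have : d ^ 2 = ‖x‖ ^ 2 - ‖w‖ ^ 2 := by rw [← h.norm_sub_sq hS, h.2]
    rw [hd] at this
    linarith
  have hy2 : ‖y‖ ^ 2 ≤ (1 + γ) ^ 2 * α ^ 2 * ‖x‖ ^ 2 := by
    rw [hd] at hy
    nlinarith [pow_le_pow_left₀ (norm_nonneg y) hy 2]
  have hcancel : (1 - (1 + γ) ^ 2 * α ^ 2) / (1 - α ^ 2) * ((1 - α ^ 2) * ‖x‖ ^ 2)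
      = (1 - (1 + γ) ^ 2 * α ^ 2) * ‖x‖ ^ 2 := by
    field_simp [(by linarith : 1 - α ^ 2 ≠ 0)]
  rw [weakGreedyFactor, Real.sq_sqrt (div_nonneg (by linarith) (by linarith)), hw, hcancel]
  linarith

end IsBestApprox

lemma exists_abs_inner_le_of_mem_span {ι : Type*} {S : Set X} {x : ι → X} {s : ι → ℝ}
    (h : ∀ i, ∀ v ∈ S, |⟪x i, v⟫| ≤ s i * ‖v‖) {g : X} (hg : g ∈ Submodule.span ℝ S) :
    ∃ C, ∀ i, |⟪x i, g⟫| ≤ s i * C := by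
  induction hg using Submodule.span_induction with
  | mem v hv => exact ⟨‖v‖, fun i => h i v hv⟩
  | zero => exact ⟨0, fun i => by simp⟩
  | add g₁ g₂ _ _ ih₁ ih₂ =>
    obtain ⟨C₁, h₁⟩ := ih₁
    obtain ⟨C₂, h₂⟩ := ih₂
    refine ⟨C₁ + C₂, fun i => ?_⟩
    rw [inner_add_right, mul_add]
    exact (abs_add_le _ _).trans (add_le_add (h₁ i) (h₂ i))
  | smul c g _ ih =>
    obtain ⟨C, hC⟩ := ih
    refine ⟨|c| * C, fun i => ?_⟩
    rw [real_inner_smul_right, abs_mul, mul_left_comm]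
    exact mul_le_mul_of_nonneg_left (hC i) (abs_nonneg c)

lemma norm_le_two_mul_of_norm_sub_le {x v : X} {s : ℝ} (hs : 0 ≤ s) (hxv : ‖x - v‖ ≤ ‖x‖)
    (hinner : ⟪x, v⟫ ≤ s * ‖v‖) : ‖v‖ ≤ 2 * s := by
  have := pow_le_pow_left₀ (norm_nonneg _) hxv 2
  rw [norm_sub_sq_real] at this
  nlinarith [norm_nonneg v]

section Residuals

variable {S : Set X} {f v : ℕ → X} {s : ℕ → ℝ}

/-- Take `g ∈ span S` close to `f 0` and split
`‖f m‖² = ⟪f m, f 0 - g⟫ + ⟪f m, g⟫ - Σ_{k<m} ⟪f m, v k⟫`: the first term is at most `ρ² / 2`,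
the others are controlled by `s m`. -/
lemma exists_sq_div_two_le_mul_add_sum (hdense : Dense (Submodule.span ℝ S : Set X))
    (hs : ∀ m, 0 ≤ s m) (hinner : ∀ m, ∀ x ∈ S, |⟪f m, x⟫| ≤ s m * ‖x‖) (hv : ∀ m, v m ∈ S)
    (hfv : ∀ m, f (m + 1) = f m - v m) (hdecr : Antitone fun m => ‖f m‖)
    {ρ : ℝ} (hρ : 0 < ρ) (hρf : ∀ m, ρ ≤ ‖f m‖) :
    ∃ C, 0 < C ∧ ∀ m, ρ ^ 2 / 2 ≤ s m * (C + 2 * ∑ k ∈ range m, s k) := by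
  have hf : ∀ m, f m = f 0 - ∑ k ∈ range m, v k := fun m => by
    induction m with
    | zero => simp
    | succ m ih => rw [hfv, ih, sum_range_succ, sub_sub]
  have hvs : ∀ k, ‖v k‖ ≤ 2 * s k := fun k =>
    norm_le_two_mul_of_norm_sub_le (hs k) (hfv k ▸ hdecr k.le_succ)
      ((le_abs_self _).trans (hinner k _ (hv k)))
  have hf0 : 0 < ‖f 0‖ := hρ.trans_le (hρf 0)
  obtain ⟨g, hg, hfg⟩ := hdense.exists_dist_lt (f 0) (by positivity : 0 < ρ ^ 2 / (2 * ‖f 0‖))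
  obtain ⟨C, hC⟩ := exists_abs_inner_le_of_mem_span hinner hg
  refine ⟨max C 1, by positivity, fun m => ?_⟩
  have h₁ : ⟪f m, f 0 - g⟫ ≤ ρ ^ 2 / 2 := calc
    ⟪f m, f 0 - g⟫ ≤ ‖f 0‖ * (ρ ^ 2 / (2 * ‖f 0‖)) := by
      rw [dist_eq_norm] at hfg
      exact (real_inner_le_norm _ _).trans
        (mul_le_mul (hdecr (Nat.zero_le m)) hfg.le (norm_nonneg _) hf0.le)
    _ = ρ ^ 2 / 2 := by field_simp
  have h₂ : ⟪f m, g⟫ ≤ s m * max C 1 :=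
    (le_abs_self _).trans ((hC m).trans (mul_le_mul_of_nonneg_left (le_max_left _ _) (hs m)))
  have h₃ : -⟪f m, ∑ k ∈ range m, v k⟫ ≤ s m * (2 * ∑ k ∈ range m, s k) := by
    rw [inner_sum, ← sum_neg_distrib, mul_sum, mul_sum]
    exact sum_le_sum fun k _ => (neg_le_abs _).trans
      ((hinner m _ (hv k)).trans (mul_le_mul_of_nonneg_left (hvs k) (hs m)))
  have hsplit : ‖f m‖ ^ 2 = ⟪f m, f 0 - g⟫ + ⟪f m, g⟫ - ⟪f m, ∑ k ∈ range m, v k⟫ := by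
    rw [← real_inner_self_eq_norm_sq, ← inner_add_right, ← inner_sub_right, sub_add_cancel,
      ← hf m]
  nlinarith [pow_le_pow_left₀ hρ.le (hρf m) 2]

theorem tendsto_zero_of_sq_mul_le_norm_sq_sub (hdense : Dense (Submodule.span ℝ S : Set X))
    {q : ℕ → ℝ} (hs : ∀ m, 0 ≤ s m) (hinner : ∀ m, ∀ x ∈ S, |⟪f m, x⟫| ≤ s m * ‖x‖)
    (hv : ∀ m, v m ∈ S) (hfv : ∀ m, f (m + 1) = f m - v m) (hq : ∀ m, 0 ≤ q m)
    (hqa : Antitone q) (henergy : ∀ m, q m * s m ^ 2 ≤ ‖f m‖ ^ 2 - ‖f (m + 1)‖ ^ 2)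
    (hdiv : ¬ Summable fun m : ℕ => q m / (m + 1)) :
    Tendsto f atTop (𝓝 0) := by
  have hdecr : Antitone fun m => ‖f m‖ := antitone_nat_of_succ_le fun m =>
    (pow_le_pow_iff_left₀ (norm_nonneg _) (norm_nonneg _) two_ne_zero).1
      (by nlinarith [henergy m, mul_nonneg (hq m) (sq_nonneg (s m))])
  have hbdd : BddBelow (Set.range fun m => ‖f m‖) := ⟨0, by rintro _ ⟨m, rfl⟩; exact norm_nonneg _⟩
  have hlim := tendsto_atTop_ciInf hdecr hbdd
  rw [tendsto_zero_iff_norm_tendsto_zero]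
  obtain hρ | hρ := (le_ciInf fun m => norm_nonneg (f m)).eq_or_lt
  · rwa [← hρ] at hlim
  obtain ⟨C, hC, hlb⟩ := exists_sq_div_two_le_mul_add_sum hdense hs hinner hv hfv hdecr hρ
    fun m => ciInf_le hbdd m
  refine absurd (summable_div_succ_of_sum_mul_sq_le (B := ‖f 0‖ ^ 2) (by positivity) hC hq hqa hs
    (fun M => ?_) hlb) hdiv
  calc ∑ m ∈ range M, q m * s m ^ 2 ≤ ∑ m ∈ range M, (‖f m‖ ^ 2 - ‖f (m + 1)‖ ^ 2) :=
        sum_le_sum fun m _ => henergy m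
    _ ≤ ‖f 0‖ ^ 2 := by
        rw [sum_range_sub' (fun m => ‖f m‖ ^ 2)]
        nlinarith [sq_nonneg ‖f M‖]

end Residuals

end

theorem weak_greedy_converges_general {X : Type*}
    [NormedAddCommGroup X] [InnerProductSpace ℝ X]
    (S : Set X) (hScone : ∀ (c : ℝ), ∀ v ∈ S, c • v ∈ S)
    (hdense : Dense (Submodule.span ℝ S : Set X))
    (u : X) (wt : ℕ → X) (hwtS : ∀ m : ℕ, wt (m + 1) ∈ S)
    (ut : ℕ → X) (hutrec : ∀ m : ℕ, ut (m + 1) = ut m + wt (m + 1))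
    (f : ℕ → X) (hf : ∀ m : ℕ, f m = u - ut m)
    (γ : ℕ → ℝ) (hγ : ∀ m : ℕ, 0 ≤ γ (m + 1))
    (hquasi : ∀ m : ℕ, ‖f m - wt (m + 1)‖ ≤ (1 + γ (m + 1)) * Metric.infDist (f m) S)
    (hfpos : ∀ m : ℕ, 0 < ‖f m‖)
    (α : ℕ → ℝ) (hα : ∀ m : ℕ, α (m + 1) = Metric.infDist (f m) S / ‖f m‖)
    (hcond : ∀ m : ℕ, (1 + γ (m + 1)) * α (m + 1) < 1)
    (μ : ℕ → ℝ)
    (hμ : ∀ m : ℕ, μ (m + 1) =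
      Real.sqrt ((1 - (1 + γ (m + 1)) ^ 2 * α (m + 1) ^ 2) / (1 - α (m + 1) ^ 2)))
    (w : ℕ → X)
    (hw : ∀ m : ℕ, w (m + 1) ∈ S ∧ ‖f m - w (m + 1)‖ = Metric.infDist (f m) S)
    (hμmono : ∀ m : ℕ, μ (m + 2) ≤ μ (m + 1))
    (hμsum : ¬ Summable (fun m : ℕ => μ (m + 1) ^ 2 / (m + 1 : ℝ))) :
    Filter.Tendsto ut Filter.atTop (𝓝 u) := by
  have hfv : ∀ m, f (m + 1) = f m - wt (m + 1) := fun m => by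
    rw [hf, hf, hutrec]; abel
  have hμ0 : ∀ m, 0 ≤ μ (m + 1) := fun m => hμ m ▸ Real.sqrt_nonneg _
  have henergy : ∀ m, μ (m + 1) ^ 2 * ‖w (m + 1)‖ ^ 2 ≤ ‖f m‖ ^ 2 - ‖f (m + 1)‖ ^ 2 :=
    fun m => by
      rw [hμ m, hα m]
      exact IsBestApprox.weakGreedyFactor_sq_mul_norm_sq_le hScone (hw m) (hγ m) (hfpos m)
        (hfv m ▸ hquasi m) (hα m ▸ hcond m)
  have hf0 : Tendsto f atTop (𝓝 0) :=
    tendsto_zero_of_sq_mul_le_norm_sq_sub hdense (fun m => norm_nonneg (w (m + 1)))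
      (fun m _ hx => IsBestApprox.abs_inner_le hScone (hw m) hx) hwtS hfv
      (fun m => sq_nonneg (μ (m + 1)))
      (antitone_nat_of_succ_le fun m => pow_le_pow_left₀ (hμ0 (m + 1)) (hμmono m) 2)
      henergy hμsum
  have hut : ut = fun m => u - f m := funext fun m => by rw [hf]; abel
  simpa [hut] using tendsto_const_nhds.sub hf0

/-- Convergence of the weak greedy algorithm: if the span of `S` is dense, best
approximations in `S` exist, `(μ_m)` is non-increasing and `Σ μ_m²/m = ∞`, then
`u_m → u`. -/
theorem weak_greedy_converges {X : Type*}
    [NormedAddCommGroup X] [InnerProductSpace ℝ X] [CompleteSpace X]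
    (S : Set X) (hS : S.Nonempty) (hScone : ∀ (c : ℝ), ∀ v ∈ S, c • v ∈ S)
    (hdense : Dense (Submodule.span ℝ S : Set X))
    (u : X) (wt : ℕ → X) (hwtS : ∀ m : ℕ, wt (m + 1) ∈ S)
    (ut : ℕ → X) (hut0 : ut 0 = 0) (hutrec : ∀ m : ℕ, ut (m + 1) = ut m + wt (m + 1))
    (f : ℕ → X) (hf : ∀ m : ℕ, f m = u - ut m)
    (γ : ℕ → ℝ) (hγ : ∀ m : ℕ, 0 ≤ γ (m + 1))
    (hquasi : ∀ m : ℕ, ‖f m - wt (m + 1)‖ ≤ (1 + γ (m + 1)) * Metric.infDist (f m) S)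
    (hfpos : ∀ m : ℕ, 0 < ‖f m‖)
    (α : ℕ → ℝ) (hα : ∀ m : ℕ, α (m + 1) = Metric.infDist (f m) S / ‖f m‖)
    (hcond : ∀ m : ℕ, (1 + γ (m + 1)) * α (m + 1) < 1)
    (μ : ℕ → ℝ)
    (hμ : ∀ m : ℕ, μ (m + 1) =
      Real.sqrt ((1 - (1 + γ (m + 1)) ^ 2 * α (m + 1) ^ 2) / (1 - α (m + 1) ^ 2)))
    (w : ℕ → X)
    (hw : ∀ m : ℕ, w (m + 1) ∈ S ∧ ‖f m - w (m + 1)‖ = Metric.infDist (f m) S)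
    (hμmono : ∀ m : ℕ, μ (m + 2) ≤ μ (m + 1))
    (hμsum : ¬ Summable (fun m : ℕ => μ (m + 1) ^ 2 / (m + 1 : ℝ))) :
    Filter.Tendsto ut Filter.atTop (𝓝 u) :=
  weak_greedy_converges_general S hScone hdense u wt hwtS ut hutrec f hf γ hγ hquasi hfpos α hα
    hcond μ hμ w hw hμmono hμsum
end

section
/- (Computable sufficient condition for convergence of the weak greedy algorithm.) In the weak greedy setting, define the computable ratios α̃_m = ‖f_{m−1} − w̃_m‖/‖f_{m−1}‖, and suppose in addition that the linear span of S is dense in X and that for each m ≥ 1 there is a best approximation w_m of f_{m−1} in S. If there exists a constant 0 < ε < 1, independent of m, such that α̃_m² ≤ (1 − ε)/((1 + γ_m)² − ε) for all m ≥ 1, then the sequence (u_m)_{m≥1} converges to u. -/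
/-!
Let `w_{m+1}` be a best approximation of the residual `f_m` from the cone `S`. Comparing with all
multiples `c • s` gives `dist(f_m, S)² = ‖f_m‖² - ‖w_{m+1}‖²` and `|⟪f_m, s⟫| ≤ ‖s‖ ‖w_{m+1}‖`
for `s ∈ S`. With quasi-optimality, the condition on `α̃_m` becomes the energy decay
`‖f_{m+1}‖² + ε ‖w_{m+1}‖² ≤ ‖f_m‖²`; hence `‖f_m‖` decreases, `∑ ‖w_{m+1}‖² < ∞`, and the actual
correction obeys `‖w̃_{m+1}‖ ≤ 2 ‖w_{m+1}‖`.

Telescoping gives `‖f_m‖² = ⟪f_m, f_0⟫ - ∑_{k<m} ⟪f_m, w̃_{k+1}⟫`. The first term is small once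
`f_0` is replaced by a nearby element of the dense span, on which `⟪f_m, ·⟫ → 0`. The sum is at most
`δ_m ∑_{k<m} δ_k ≤ δ_m √(m ∑ δ_k²)` with `δ_k = 2 ‖w_{k+1}‖`, which is small for infinitely many `m`
because `m δ_m²` cannot stay bounded below for a summable sequence `δ_m²`. Monotonicity of `‖f_m‖`
then forces `‖f_m‖ → 0`.
-/

open scoped RealInnerProductSpace Topology

open Filter Finset Metric

theorem Summable.frequently_natCast_mul_lt {a : ℕ → ℝ} (ha : Summable a) {η : ℝ} (hη : 0 < η) :
    ∃ᶠ m : ℕ in atTop, (m : ℝ) * a m < η := by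
  by_contra h
  rw [not_frequently] at h
  refine Real.not_summable_natCast_inv ((ha.div_const η).of_norm_bounded_eventually_nat ?_)
  filter_upwards [h] with m hm
  have hm0 : (0 : ℝ) < m := Nat.cast_pos.2 (Nat.pos_of_ne_zero fun h0 => hm (by simp [h0, hη]))
  rw [norm_inv, Real.norm_natCast, inv_le_iff_one_le_mul₀ hm0, div_mul_eq_mul_div, one_le_div₀ hη]
  linarith

theorem frequently_mul_sum_range_lt {δ : ℕ → ℝ} (hsum : Summable fun m => δ m ^ 2) {η : ℝ}
    (hη : 0 < η) :
    ∃ᶠ m in atTop, δ m * ∑ k ∈ range m, δ k < η := by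
  set T := ∑' m, δ m ^ 2
  have hT : 0 ≤ T := tsum_nonneg fun m => sq_nonneg _
  have hCS : ∀ m, (∑ k ∈ range m, δ k) ^ 2 ≤ m * T := fun m =>
    calc (∑ k ∈ range m, δ k) ^ 2 ≤ #(range m) * ∑ k ∈ range m, δ k ^ 2 := sq_sum_le_card_mul_sum_sq
      _ ≤ m * T := by
        rw [card_range]
        exact mul_le_mul_of_nonneg_left (hsum.sum_le_tsum _ fun k _ => sq_nonneg _) m.cast_nonneg
  refine (hsum.frequently_natCast_mul_lt (div_pos (pow_pos hη 2) (by linarith : 0 < T + 1))).mono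
    fun m hm => abs_lt.1 (abs_lt_of_sq_lt_sq ?_ hη.le) |>.2
  rw [lt_div_iff₀ (by linarith)] at hm
  calc (δ m * ∑ k ∈ range m, δ k) ^ 2 = δ m ^ 2 * (∑ k ∈ range m, δ k) ^ 2 := mul_pow _ _ _
    _ ≤ δ m ^ 2 * (m * (T + 1)) := by gcongr; linarith [hCS m]
    _ < η ^ 2 := by linarith

theorem tendsto_zero_of_antitone_of_frequently_lt {a : ℕ → ℝ} (ha : Antitone a) (h0 : ∀ m, 0 ≤ a m)
    (h : ∀ η > 0, ∃ᶠ m in atTop, a m < η) : Tendsto a atTop (𝓝 0) := by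
  refine tendsto_order.2
    ⟨fun b hb => Eventually.of_forall fun m => hb.trans_le (h0 m), fun c hc => ?_⟩
  obtain ⟨N, hN⟩ := (h c hc).exists
  exact eventually_atTop.2 ⟨N, fun m hm => (ha hm).trans_lt hN⟩

theorem summable_of_mul_le_sub_succ_s15 {a b : ℕ → ℝ} {ε : ℝ} (hε : 0 < ε) (ha : ∀ m, 0 ≤ a m)
    (hb : ∀ m, 0 ≤ b m) (h : ∀ m, ε * b m ≤ a m - a (m + 1)) : Summable b := by
  refine summable_of_sum_range_le hb (c := a 0 / ε) fun n => ?_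
  rw [le_div_iff₀' hε, mul_sum]
  calc ∑ i ∈ range n, ε * b i ≤ ∑ i ∈ range n, (a i - a (i + 1)) := sum_le_sum fun i _ => h i
    _ = a 0 - a n := sum_range_sub' a n
    _ ≤ a 0 := by linarith [ha n]

section Hilbert

variable {X : Type*} [NormedAddCommGroup X] [InnerProductSpace ℝ X] {S : Set X}

theorem tendsto_inner_of_mem_span {ι : Type*} {l : Filter ι} {f : ι → X}
    (h : ∀ s ∈ S, Tendsto (fun i => ⟪f i, s⟫) l (𝓝 0)) {x : X} (hx : x ∈ Submodule.span ℝ S) :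
    Tendsto (fun i => ⟪f i, x⟫) l (𝓝 0) := by
  induction hx using Submodule.span_induction with
  | mem s hs => exact h s hs
  | zero => simpa using tendsto_const_nhds
  | add x y _ _ hx hy => simpa [inner_add_right] using hx.add hy
  | smul c x _ hx => simpa [real_inner_smul_right] using hx.const_mul c

theorem norm_sq_le_of_sub_succ {f r : ℕ → X} {δ : ℕ → ℝ} (hrec : ∀ m, f (m + 1) = f m - r m)
    (hrS : ∀ m, r m ∈ S) (hinner : ∀ m, ∀ s ∈ S, |⟪f m, s⟫| ≤ ‖s‖ * δ m)
    (hr : ∀ m, ‖r m‖ ≤ δ m) (m : ℕ) (x : X) :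
    ‖f m‖ ^ 2 ≤ ‖f m‖ * ‖f 0 - x‖ + |⟪f m, x⟫| + δ m * ∑ k ∈ range m, δ k := by
  have htel : f 0 - f m = ∑ k ∈ range m, r k := by
    rw [← sum_range_sub' f m]
    exact sum_congr rfl fun k _ => by rw [hrec]; abel
  have hcross : |∑ k ∈ range m, ⟪f m, r k⟫| ≤ δ m * ∑ k ∈ range m, δ k := by
    rw [mul_sum]
    refine (abs_sum_le_sum_abs _ _).trans (sum_le_sum fun k _ => ?_)
    calc |⟪f m, r k⟫| ≤ ‖r k‖ * δ m := hinner m _ (hrS k)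
      _ ≤ δ k * δ m := by gcongr; exacts [(norm_nonneg _).trans (hr m), hr k]
      _ = δ m * δ k := mul_comm _ _
  have hid : ‖f m‖ ^ 2 = ⟪f m, f 0 - x⟫ + ⟪f m, x⟫ - ∑ k ∈ range m, ⟪f m, r k⟫ := by
    rw [← inner_sum, ← htel, inner_sub_right, inner_sub_right, real_inner_self_eq_norm_sq]; ring
  rw [hid]
  linarith [real_inner_le_norm (f m) (f 0 - x), le_abs_self ⟪f m, x⟫,
    neg_abs_le (∑ k ∈ range m, ⟪f m, r k⟫)]

theorem tendsto_norm_zero_of_abs_inner_le (hdense : Dense (Submodule.span ℝ S : Set X))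
    {f r : ℕ → X} {δ : ℕ → ℝ} (hrec : ∀ m, f (m + 1) = f m - r m) (hrS : ∀ m, r m ∈ S)
    (hanti : Antitone fun m => ‖f m‖) (hinner : ∀ m, ∀ s ∈ S, |⟪f m, s⟫| ≤ ‖s‖ * δ m)
    (hr : ∀ m, ‖r m‖ ≤ δ m) (hsum : Summable fun m => δ m ^ 2) :
    Tendsto (fun m => ‖f m‖) atTop (𝓝 0) := by
  have hδ : Tendsto δ atTop (𝓝 0) := by
    simpa [Real.sqrt_sq ((norm_nonneg _).trans (hr _))] using hsum.tendsto_atTop_zero.sqrt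
  have hspan : ∀ x ∈ Submodule.span ℝ S, Tendsto (fun m => ⟪f m, x⟫) atTop (𝓝 0) :=
    fun x => tendsto_inner_of_mem_span fun s hs => squeeze_zero_norm
      (fun m => (Real.norm_eq_abs _).trans_le (hinner m s hs)) (by simpa using hδ.const_mul ‖s‖)
  refine tendsto_zero_of_antitone_of_frequently_lt hanti (fun m => norm_nonneg _) fun η hη => ?_
  set η' := η ^ 2 / (‖f 0‖ + 2)
  have hη' : 0 < η' := by positivity
  obtain ⟨x, hx, hdist⟩ := hdense.exists_dist_lt (f 0) hη'
  have hx_small : ∀ᶠ m in atTop, |⟪f m, x⟫| < η' := by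
    simpa using (hspan x hx).abs.eventually (gt_mem_nhds (by simpa using hη'))
  refine ((frequently_mul_sum_range_lt hsum hη').and_eventually hx_small).mono fun m hm => ?_
  refine abs_lt.1 (abs_lt_of_sq_lt_sq ?_ hη.le) |>.2
  rw [dist_eq_norm] at hdist
  calc ‖f m‖ ^ 2 ≤ ‖f m‖ * ‖f 0 - x‖ + |⟪f m, x⟫| + δ m * ∑ k ∈ range m, δ k :=
        norm_sq_le_of_sub_succ hrec hrS hinner hr m x
    _ < η' * (‖f 0‖ + 2) := by
        have := mul_le_mul (hanti m.zero_le) hdist.le (norm_nonneg _) (norm_nonneg _)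
        linarith [hm.1, hm.2]
    _ = η ^ 2 := div_mul_cancel₀ _ (by positivity)

section Cone

variable (hS : ∀ c : ℝ, ∀ v ∈ S, c • v ∈ S)
include hS

theorem infDist_sq_mul_norm_sq_le (v : X) {s : X} (hs : s ∈ S) :
    infDist v S ^ 2 * ‖s‖ ^ 2 ≤ ‖v‖ ^ 2 * ‖s‖ ^ 2 - ⟪v, s⟫ ^ 2 := by
  rcases eq_or_ne s 0 with rfl | hs0
  · simp
  set c := ⟪v, s⟫ / ‖s‖ ^ 2
  have hdist : infDist v S ≤ ‖v - c • s‖ := by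
    simpa [dist_eq_norm] using infDist_le_dist_of_mem (hS c s hs)
  calc infDist v S ^ 2 * ‖s‖ ^ 2 ≤ ‖v - c • s‖ ^ 2 * ‖s‖ ^ 2 := by
        gcongr
        exact infDist_nonneg
    _ = ‖v‖ ^ 2 * ‖s‖ ^ 2 - ⟪v, s⟫ ^ 2 := by
        rw [norm_sub_sq_real, real_inner_smul_right, norm_smul, Real.norm_eq_abs, mul_pow, sq_abs]
        simp only [c]
        field_simp
        ring

theorem inner_eq_norm_sq_of_norm_sub_eq_infDist {v w : X} (hw : w ∈ S)
    (hbest : ‖v - w‖ = infDist v S) : ⟪v, w⟫ = ‖w‖ ^ 2 := by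
  have h := infDist_sq_mul_norm_sq_le hS v hw
  rw [← hbest, norm_sub_sq_real] at h
  have hsq : (⟪v, w⟫ - ‖w‖ ^ 2) ^ 2 ≤ 0 := by nlinarith
  exact sub_eq_zero.1 (pow_eq_zero_iff two_ne_zero |>.1 (le_antisymm hsq (sq_nonneg _)))

theorem infDist_sq_eq_of_norm_sub_eq_infDist {v w : X} (hw : w ∈ S)
    (hbest : ‖v - w‖ = infDist v S) : infDist v S ^ 2 = ‖v‖ ^ 2 - ‖w‖ ^ 2 := by
  rw [← hbest, norm_sub_sq_real, inner_eq_norm_sq_of_norm_sub_eq_infDist hS hw hbest]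
  ring

theorem abs_inner_le_of_norm_sub_eq_infDist {v w s : X} (hw : w ∈ S)
    (hbest : ‖v - w‖ = infDist v S) (hs : s ∈ S) : |⟪v, s⟫| ≤ ‖s‖ * ‖w‖ := by
  have h := infDist_sq_mul_norm_sq_le hS v hs
  rw [infDist_sq_eq_of_norm_sub_eq_infDist hS hw hbest] at h
  exact abs_le_of_sq_le_sq (by linarith) (by positivity)

theorem norm_le_two_mul_of_norm_sub_le_s15 {v w r : X} (hw : w ∈ S)
    (hbest : ‖v - w‖ = infDist v S) (hr : r ∈ S) (hle : ‖v - r‖ ≤ ‖v‖) : ‖r‖ ≤ 2 * ‖w‖ := by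
  have hsq : ‖v - r‖ ^ 2 ≤ ‖v‖ ^ 2 := by gcongr
  rw [norm_sub_sq_real] at hsq
  have := (le_abs_self _).trans (abs_inner_le_of_norm_sub_eq_infDist hS hw hbest hr)
  nlinarith [norm_nonneg r, norm_nonneg w]

theorem norm_sub_sq_add_mul_norm_sq_le {v w r : X} {G ε : ℝ} (hw : w ∈ S)
    (hbest : ‖v - w‖ = infDist v S) (hε0 : 0 ≤ ε) (hε1 : ε ≤ 1) (hG : 1 ≤ G)
    (hquasi : ‖v - r‖ ≤ G * infDist v S)
    (hcond : ‖v - r‖ ^ 2 * (G ^ 2 - ε) ≤ (1 - ε) * ‖v‖ ^ 2) :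
    ‖v - r‖ ^ 2 + ε * ‖w‖ ^ 2 ≤ ‖v‖ ^ 2 := by
  have hd := infDist_sq_eq_of_norm_sub_eq_infDist hS hw hbest
  have hq : ‖v - r‖ ^ 2 ≤ G ^ 2 * infDist v S ^ 2 := by rw [← mul_pow]; gcongr
  have hG2 : 1 ≤ G ^ 2 := one_le_pow₀ hG
  suffices G ^ 2 * (‖v - r‖ ^ 2 + ε * ‖w‖ ^ 2) ≤ G ^ 2 * ‖v‖ ^ 2 from
    le_of_mul_le_mul_left this (by positivity)
  have hεd := mul_le_mul_of_nonneg_left hq hε0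
  have hεa := mul_le_mul_of_nonneg_left hG2 (mul_nonneg (sub_nonneg.2 hε1) (sq_nonneg ‖v‖))
  have hw2 : ε * G ^ 2 * ‖w‖ ^ 2 = ε * G ^ 2 * (‖v‖ ^ 2 - infDist v S ^ 2) := by rw [hd]; ring
  linarith

end Cone

end Hilbert

theorem weak_greedy_computable_condition_general {X : Type*}
    [NormedAddCommGroup X] [InnerProductSpace ℝ X]
    (S : Set X) (hScone : ∀ (c : ℝ), ∀ v ∈ S, c • v ∈ S)
    (hdense : Dense (Submodule.span ℝ S : Set X))
    (u : X) (wt : ℕ → X) (hwtS : ∀ m : ℕ, wt (m + 1) ∈ S)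
    (ut : ℕ → X) (hutrec : ∀ m : ℕ, ut (m + 1) = ut m + wt (m + 1))
    (f : ℕ → X) (hf : ∀ m : ℕ, f m = u - ut m)
    (γ : ℕ → ℝ) (hγ : ∀ m : ℕ, 0 ≤ γ (m + 1))
    (hquasi : ∀ m : ℕ, ‖f m - wt (m + 1)‖ ≤ (1 + γ (m + 1)) * Metric.infDist (f m) S)
    (hfpos : ∀ m : ℕ, 0 < ‖f m‖)
    (αt : ℕ → ℝ) (hαt : ∀ m : ℕ, αt (m + 1) = ‖f m - wt (m + 1)‖ / ‖f m‖)
    (w : ℕ → X)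
    (hw : ∀ m : ℕ, w (m + 1) ∈ S ∧ ‖f m - w (m + 1)‖ = Metric.infDist (f m) S)
    (ε : ℝ) (hε0 : 0 < ε) (hε1 : ε < 1)
    (hcond : ∀ m : ℕ, αt (m + 1) ^ 2 ≤ (1 - ε) / ((1 + γ (m + 1)) ^ 2 - ε)) :
    Filter.Tendsto ut Filter.atTop (𝓝 u) := by
  have hfrec : ∀ m, f (m + 1) = f m - wt (m + 1) := fun m => by rw [hf, hf, hutrec]; abel
  have hdecay : ∀ m, ‖f (m + 1)‖ ^ 2 + ε * ‖w (m + 1)‖ ^ 2 ≤ ‖f m‖ ^ 2 := fun m => by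
    have hG : 1 ≤ 1 + γ (m + 1) := le_add_of_nonneg_right (hγ m)
    have hden : 0 < (1 + γ (m + 1)) ^ 2 - ε := by linarith [one_le_pow₀ (n := 2) hG]
    have h := hcond m
    rw [hαt m, le_div_iff₀ hden, div_pow, div_mul_eq_mul_div,
      div_le_iff₀ (pow_pos (hfpos m) 2)] at h
    rw [hfrec m]
    exact norm_sub_sq_add_mul_norm_sq_le hScone (hw m).1 (hw m).2 hε0.le hε1.le hG (hquasi m) h
  have hanti : Antitone fun m => ‖f m‖ := antitone_nat_of_succ_le fun m =>
    pow_le_pow_iff_left₀ (norm_nonneg _) (norm_nonneg _) two_ne_zero |>.1 <| by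
      linarith [hdecay m, mul_nonneg hε0.le (sq_nonneg ‖w (m + 1)‖)]
  have hsum : Summable fun m => ‖w (m + 1)‖ ^ 2 :=
    summable_of_mul_le_sub_succ_s15 (a := fun m => ‖f m‖ ^ 2) hε0 (fun m => sq_nonneg _)
      (fun m => sq_nonneg _) fun m => by linarith [hdecay m]
  have hlim : Tendsto (fun m => ‖f m‖) atTop (𝓝 0) :=
    tendsto_norm_zero_of_abs_inner_le hdense (δ := fun m => 2 * ‖w (m + 1)‖) hfrec hwtS hanti
      (fun m s hs => (abs_inner_le_of_norm_sub_eq_infDist hScone (hw m).1 (hw m).2 hs).trans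
        (mul_le_mul_of_nonneg_left (by linarith [norm_nonneg (w (m + 1))]) (norm_nonneg s)))
      (fun m => norm_le_two_mul_of_norm_sub_le_s15 hScone (hw m).1 (hw m).2 (hwtS m)
        (hfrec m ▸ hanti m.le_succ))
      (by simpa only [mul_pow] using hsum.mul_left (2 ^ 2))
  rw [tendsto_iff_norm_sub_tendsto_zero]
  simpa [hf, norm_sub_rev] using hlim

/-- Computable sufficient condition for convergence of the weak greedy algorithm: if the
span of `S` is dense, best approximations in `S` exist, and the computable ratios
`α̃_m = ‖f_{m-1} - w̃_m‖/‖f_{m-1}‖` satisfy `α̃_m² ≤ (1 - ε)/((1 + γ_m)² - ε)` for some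
fixed `0 < ε < 1`, then `u_m → u`. -/
theorem weak_greedy_computable_condition {X : Type*}
    [NormedAddCommGroup X] [InnerProductSpace ℝ X] [CompleteSpace X]
    (S : Set X) (hS : S.Nonempty) (hScone : ∀ (c : ℝ), ∀ v ∈ S, c • v ∈ S)
    (hdense : Dense (Submodule.span ℝ S : Set X))
    (u : X) (wt : ℕ → X) (hwtS : ∀ m : ℕ, wt (m + 1) ∈ S)
    (ut : ℕ → X) (hut0 : ut 0 = 0) (hutrec : ∀ m : ℕ, ut (m + 1) = ut m + wt (m + 1))
    (f : ℕ → X) (hf : ∀ m : ℕ, f m = u - ut m)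
    (γ : ℕ → ℝ) (hγ : ∀ m : ℕ, 0 ≤ γ (m + 1))
    (hquasi : ∀ m : ℕ, ‖f m - wt (m + 1)‖ ≤ (1 + γ (m + 1)) * Metric.infDist (f m) S)
    (hfpos : ∀ m : ℕ, 0 < ‖f m‖)
    (αt : ℕ → ℝ) (hαt : ∀ m : ℕ, αt (m + 1) = ‖f m - wt (m + 1)‖ / ‖f m‖)
    (w : ℕ → X)
    (hw : ∀ m : ℕ, w (m + 1) ∈ S ∧ ‖f m - w (m + 1)‖ = Metric.infDist (f m) S)
    (ε : ℝ) (hε0 : 0 < ε) (hε1 : ε < 1)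
    (hcond : ∀ m : ℕ, αt (m + 1) ^ 2 ≤ (1 - ε) / ((1 + γ (m + 1)) ^ 2 - ε)) :
    Filter.Tendsto ut Filter.atTop (𝓝 u) :=
  weak_greedy_computable_condition_general S hScone hdense u wt hwtS ut hutrec f hf γ hγ hquasi
    hfpos αt hαt w hw ε hε0 hε1 hcond
end
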